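/- arXiv:1811.09687 — 13 statements merged into one kernel-verified Lean document; each statement's English description precedes it below -/
import Mathlib

section
/- Let (E,d) be a metric space satisfying the triangle equality whose cardinality is not equal to 4. Then there exists an isometric embedding of E into the real line ℝ (equipped with the metric |x−y|). -/
/-- A metric space satisfies the *triangle equality* if for every three points the
largest of the three pairwise distances equals the sum of the remaining two. -/
def TriangleEquality (E : Type*) [MetricSpace E] : Prop :=
  ∀ x y z : E,
    dist x y = dist y z + dist z x ∨
    dist y z = dist x y + dist z x ∨
    dist z x = dist x y + dist y z

set_option maxHeartbeats 2000000 in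
private lemma auxL {u v s D : ℝ} (hD : 0 < D) (hs : 0 ≤ s)
    (h1 : s = |u| + |v| ∨ |u| = s + |v| ∨ |v| = s + |u|)
    (h2 : s = |u - D| + |v - D| ∨ |u - D| = s + |v - D| ∨ |v - D| = s + |u - D|)
    (hne : s ≠ |u - v|) : u + v = D ∧ s = D := by
  rcases abs_cases (u - v) with ⟨e0, f0⟩ | ⟨e0, f0⟩ <;> rw [e0] at hne <;>
  rcases abs_cases u with ⟨e1, f1⟩ | ⟨e1, f1⟩ <;> rw [e1] at h1 <;>
  rcases abs_cases v with ⟨e2, f2⟩ | ⟨e2, f2⟩ <;> rw [e2] at h1 <;>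
  rcases abs_cases (u - D) with ⟨e3, f3⟩ | ⟨e3, f3⟩ <;> rw [e3] at h2 <;>
  rcases abs_cases (v - D) with ⟨e4, f4⟩ | ⟨e4, f4⟩ <;> rw [e4] at h2 <;>
  rcases h1 with h1 | h1 | h1 <;> rcases h2 with h2 | h2 | h2 <;>
  first
    | (constructor <;> linarith)
    | (exact absurd (by linarith) hne)

private lemma auxL2 {u v s D : ℝ} (hD : 0 < D) (hs : 0 ≤ s)
    (h1 : s = |u| + |v| ∨ |u| = s + |v| ∨ |v| = s + |u|)
    (h2 : s = |u - D| + |v - D| ∨ |u - D| = s + |v - D| ∨ |v - D| = s + |u - D|) :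
    s = |u - v| ∨ (u + v = D ∧ s = D) := by
  by_cases h : s = |u - v|
  · exact Or.inl h
  · exact Or.inr (auxL hD hs h1 h2 h)

private lemma auxM {u v w s s1 s2 D : ℝ} (hD : 0 < D)
    (hs : 0 ≤ s) (hs1 : 0 ≤ s1) (hs2 : 0 ≤ s2)
    (hbad : s ≠ |u - v|) (hw0 : w ≠ 0) (hwD : w ≠ D) (h10 : s1 ≠ 0) (h20 : s2 ≠ 0)
    (hxy1 : s = |u| + |v| ∨ |u| = s + |v| ∨ |v| = s + |u|)
    (hxy2 : s = |u - D| + |v - D| ∨ |u - D| = s + |v - D| ∨ |v - D| = s + |u - D|)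
    (hxz1 : s1 = |u| + |w| ∨ |u| = s1 + |w| ∨ |w| = s1 + |u|)
    (hxz2 : s1 = |u - D| + |w - D| ∨ |u - D| = s1 + |w - D| ∨ |w - D| = s1 + |u - D|)
    (hyz1 : s2 = |v| + |w| ∨ |v| = s2 + |w| ∨ |w| = s2 + |v|)
    (hyz2 : s2 = |v - D| + |w - D| ∨ |v - D| = s2 + |w - D| ∨ |w - D| = s2 + |v - D|)
    (hxyz : s = s1 + s2 ∨ s1 = s + s2 ∨ s2 = s + s1) : False := by
  obtain ⟨huv, hsD⟩ := auxL hD hs hxy1 hxy2 hbad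
  have hu0 : u ≠ 0 := by
    intro h; apply hbad
    have hv : v = D := by linarith
    rw [h, hv, zero_sub, abs_neg, abs_of_pos hD]; linarith
  have hv0 : v ≠ 0 := by
    intro h; apply hbad
    have hu : u = D := by linarith
    rw [h, hu, sub_zero, abs_of_pos hD]; linarith
  rcases auxL2 hD hs1 hxz1 hxz2 with h1 | ⟨huw, hs1D⟩
  · rcases auxL2 hD hs2 hyz1 hyz2 with h2 | ⟨hvw, hs2D⟩
    · rcases abs_cases (u - w) with ⟨e1, f1⟩ | ⟨e1, f1⟩ <;> rw [e1] at h1 <;>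
      rcases abs_cases (v - w) with ⟨e2, f2⟩ | ⟨e2, f2⟩ <;> rw [e2] at h2 <;>
      rcases hxyz with h | h | h <;>
      first
        | linarith
        | (exact hw0 (by linarith))
        | (exact hwD (by linarith))
        | (exact hu0 (by linarith))
        | (exact hv0 (by linarith))
    · exact h10 (by rw [h1, show u - w = 0 by linarith, abs_zero])
  · rcases auxL2 hD hs2 hyz1 hyz2 with h2 | ⟨hvw, hs2D⟩
    · exact h20 (by rw [h2, show v - w = 0 by linarith, abs_zero])
    · rcases hxyz with h | h | h <;> linarith

/-- A metric space satisfying the triangle equality whose cardinality is not `4`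
admits an isometric embedding into the real line. -/
theorem stmt0 (E : Type*) [MetricSpace E]
    (htri : TriangleEquality E) (hcard : Cardinal.mk E ≠ 4) :
    ∃ φ : E → ℝ, Isometry φ := by
  rcases subsingleton_or_nontrivial E with hsub | hnt
  · exact ⟨fun _ => 0, Isometry.of_dist_eq fun x y => by rw [Subsingleton.elim x y]; simp⟩
  obtain ⟨a, b, hab⟩ := exists_pair_ne E
  have hD : 0 < dist a b := dist_pos.2 hab
  -- reshaped triangle equality
  have tri : ∀ p q c : E, dist p q = dist c p + dist c q ∨
      dist c p = dist p q + dist c q ∨ dist c q = dist p q + dist c p := by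
    intro p q c
    rcases htri p q c with h | h | h
    · left; rw [dist_comm q c] at h; linarith
    · right; right; rw [dist_comm q c] at h; linarith
    · right; left; rw [dist_comm q c] at h; linarith
  -- coordinates
  have key : ∀ x : E, ∃ t : ℝ, |t| = dist a x ∧ |t - dist a b| = dist b x := by
    intro x
    have h0 : (0:ℝ) ≤ dist a x := dist_nonneg
    have h0' : (0:ℝ) ≤ dist a b := dist_nonneg
    have h0'' : (0:ℝ) ≤ dist b x := dist_nonneg
    rcases htri a b x with h | h | h
    · refine ⟨dist a x, abs_of_nonneg dist_nonneg, ?_⟩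
      rw [dist_comm x a] at h
      rw [abs_of_nonpos (by linarith)]; linarith
    · refine ⟨-dist a x, by rw [abs_neg]; exact abs_of_nonneg dist_nonneg, ?_⟩
      rw [dist_comm x a] at h
      rw [abs_of_nonpos (by linarith)]; linarith
    · refine ⟨dist a x, abs_of_nonneg dist_nonneg, ?_⟩
      rw [dist_comm x a] at h
      rw [abs_of_nonneg (by linarith)]; linarith
  choose φ hφa hφb using key
  refine ⟨φ, Isometry.of_dist_eq fun x y => ?_⟩
  rw [Real.dist_eq]
  by_contra hne
  have hne' : dist x y ≠ |φ x - φ y| := Ne.symm hne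
  have hxy1 : dist x y = |φ x| + |φ y| ∨ |φ x| = dist x y + |φ y| ∨
      |φ y| = dist x y + |φ x| := by rw [hφa x, hφa y]; exact tri x y a
  have hxy2 : dist x y = |φ x - dist a b| + |φ y - dist a b| ∨
      |φ x - dist a b| = dist x y + |φ y - dist a b| ∨
      |φ y - dist a b| = dist x y + |φ x - dist a b| := by
    rw [hφb x, hφb y]; exact tri x y b
  obtain ⟨huv, hsD⟩ := auxL hD dist_nonneg hxy1 hxy2 hne'
  have hu0 : φ x ≠ 0 := by
    intro h; apply hne'
    have hv : φ y = dist a b := by linarith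
    rw [h, hv, zero_sub, abs_neg, abs_of_pos hD]; linarith
  have hv0 : φ y ≠ 0 := by
    intro h; apply hne'
    have hu : φ x = dist a b := by linarith
    rw [h, hu, sub_zero, abs_of_pos hD]; linarith
  have huD : φ x ≠ dist a b := by intro h; exact hv0 (by linarith)
  have hvD : φ y ≠ dist a b := by intro h; exact hu0 (by linarith)
  -- the four points are pairwise distinct
  have hax : a ≠ x := by
    intro h; apply hu0
    have h2 : dist a x = 0 := by rw [← h, dist_self]
    exact abs_eq_zero.1 ((hφa x).trans h2)
  have hay : a ≠ y := by
    intro h; apply hv0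
    have h2 : dist a y = 0 := by rw [← h, dist_self]
    exact abs_eq_zero.1 ((hφa y).trans h2)
  have hbx : b ≠ x := by
    intro h; apply huD
    have h2 : dist b x = 0 := by rw [← h, dist_self]
    exact sub_eq_zero.1 (abs_eq_zero.1 ((hφb x).trans h2))
  have hby : b ≠ y := by
    intro h; apply hvD
    have h2 : dist b y = 0 := by rw [← h, dist_self]
    exact sub_eq_zero.1 (abs_eq_zero.1 ((hφb y).trans h2))
  have hxy : x ≠ y := by
    intro h; rw [h, dist_self] at hsD; linarith
  -- a fifth point exists
  have hz : ∃ z : E, z ≠ a ∧ z ≠ b ∧ z ≠ x ∧ z ≠ y := by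
    by_contra hno
    push_neg at hno
    apply hcard
    have huniv : (Set.univ : Set E) = {a, b, x, y} := by
      ext z
      simp only [Set.mem_univ, Set.mem_insert_iff, Set.mem_singleton_iff, true_iff]
      by_cases h1 : z = a; · tauto
      by_cases h2 : z = b; · tauto
      by_cases h3 : z = x; · tauto
      exact Or.inr (Or.inr (Or.inr (hno z h1 h2 h3)))
    have hmem1 : a ∉ ({b, x, y} : Set E) := by simp [hab, hax, hay]
    have hmem2 : b ∉ ({x, y} : Set E) := by simp [hbx, hby]
    have hmem3 : x ∉ ({y} : Set E) := by simp [hxy]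
    calc Cardinal.mk E = Cardinal.mk (Set.univ : Set E) := Cardinal.mk_univ.symm
      _ = Cardinal.mk ({a, b, x, y} : Set E) := by rw [huniv]
      _ = 4 := by
          rw [Cardinal.mk_insert hmem1, Cardinal.mk_insert hmem2,
            Cardinal.mk_insert hmem3, Cardinal.mk_singleton]
          norm_num
  obtain ⟨z, hza, hzb, hzx, hzy⟩ := hz
  have hw0 : φ z ≠ 0 := by
    intro h; apply hza; symm
    apply dist_eq_zero.1; rw [← hφa z, h, abs_zero]
  have hwD : φ z ≠ dist a b := by
    intro h; apply hzb; symm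
    apply dist_eq_zero.1; rw [← hφb z, h, sub_self, abs_zero]
  have hzx' : dist x z ≠ 0 := fun h => hzx (dist_eq_zero.1 h).symm
  have hzy' : dist y z ≠ 0 := fun h => hzy (dist_eq_zero.1 h).symm
  have hxz1 : dist x z = |φ x| + |φ z| ∨ |φ x| = dist x z + |φ z| ∨
      |φ z| = dist x z + |φ x| := by rw [hφa x, hφa z]; exact tri x z a
  have hxz2 : dist x z = |φ x - dist a b| + |φ z - dist a b| ∨
      |φ x - dist a b| = dist x z + |φ z - dist a b| ∨
      |φ z - dist a b| = dist x z + |φ x - dist a b| := by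
    rw [hφb x, hφb z]; exact tri x z b
  have hyz1 : dist y z = |φ y| + |φ z| ∨ |φ y| = dist y z + |φ z| ∨
      |φ z| = dist y z + |φ y| := by rw [hφa y, hφa z]; exact tri y z a
  have hyz2 : dist y z = |φ y - dist a b| + |φ z - dist a b| ∨
      |φ y - dist a b| = dist y z + |φ z - dist a b| ∨
      |φ z - dist a b| = dist y z + |φ y - dist a b| := by
    rw [hφb y, hφb z]; exact tri y z b
  have hxyz : dist x y = dist x z + dist y z ∨ dist x z = dist x y + dist y z ∨
      dist y z = dist x y + dist x z := by
    have h := tri x y z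
    rw [dist_comm z x, dist_comm z y] at h
    exact h
  exact auxM hD dist_nonneg dist_nonneg dist_nonneg hne' hw0 hwD hzx' hzy'
    hxy1 hxy2 hxz1 hxz2 hyz1 hyz2 hxyz
end

section
/- Let (E,d) be a metric space with exactly 4 points satisfying the triangle equality. Then either E admits an isometric embedding into the real line ℝ, or there exist real numbers x,y > 0 with x ≠ y and a labeling E = {A,B,C,D} of the four points such that d(A,B) = d(C,D) = x, d(A,D) = d(B,C) = y, and d(A,C) = d(B,D) = |x−y|. -/
/-- A four-point metric space satisfying the triangle equality either embeds
isometrically into the real line, or is of the exceptional form of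
Example 1.4 of the paper. -/
theorem stmt1 (E : Type*) [MetricSpace E]
    (hcard : Nat.card E = 4) (htri : TriangleEquality E) :
    (∃ φ : E → ℝ, Isometry φ) ∨
    (∃ x y : ℝ, 0 < x ∧ 0 < y ∧ x ≠ y ∧
      ∃ A B C D : E, (∀ e : E, e = A ∨ e = B ∨ e = C ∨ e = D) ∧
        A ≠ B ∧ A ≠ C ∧ A ≠ D ∧ B ≠ C ∧ B ≠ D ∧ C ≠ D ∧
        dist A B = x ∧ dist C D = x ∧
        dist A D = y ∧ dist B C = y ∧
        dist A C = |x - y| ∧ dist B D = |x - y|) := by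
  classical
  have hfin : Finite E := Nat.finite_of_card_ne_zero (by omega)
  have _inst : Fintype E := Fintype.ofFinite E
  have hcard4 : Fintype.card E = 4 := by rwa [← Nat.card_eq_fintype_card]
  have hnt : Nontrivial E := Fintype.one_lt_card_iff_nontrivial.1 (by omega)
  obtain ⟨p0, q0, hpq0⟩ := exists_pair_ne E
  obtain ⟨⟨A, B⟩, -, hmax⟩ := Finset.exists_max_image (Finset.univ : Finset (E × E))
    (fun pr : E × E => dist pr.1 pr.2) ⟨(p0, p0), Finset.mem_univ _⟩
  have hM : ∀ p q : E, dist p q ≤ dist A B := fun p q => hmax (p, q) (Finset.mem_univ _)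
  have hMpos : 0 < dist A B := lt_of_lt_of_le (dist_pos.2 hpq0) (hM p0 q0)
  have hAB : A ≠ B := by
    intro h
    rw [h, dist_self] at hMpos
    exact lt_irrefl _ hMpos
  -- every other point lies "between" A and B
  have key : ∀ P : E, P ≠ A → P ≠ B → dist A P + dist P B = dist A B := by
    intro P hPA hPB
    rcases htri A B P with h | h | h
    · linarith [dist_comm B P, dist_comm P A]
    · have h0 : dist P A = 0 := le_antisymm (by linarith [hM B P]) dist_nonneg
      exact absurd (eq_of_dist_eq_zero h0) hPA
    · have h0 : dist B P = 0 := le_antisymm (by linarith [hM P A]) dist_nonneg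
      exact absurd (eq_of_dist_eq_zero h0).symm hPB
  -- get the other two points
  have hscard : ((Finset.univ : Finset E) \ {A, B}).card = 2 := by
    rw [Finset.card_sdiff_of_subset (Finset.subset_univ _), Finset.card_univ, hcard4,
      Finset.card_insert_of_notMem (by simpa using hAB), Finset.card_singleton]
  obtain ⟨C, D, hCD, hs⟩ := Finset.card_eq_two.1 hscard
  have hCmem : C ∈ (Finset.univ : Finset E) \ {A, B} := by rw [hs]; simp
  have hDmem : D ∈ (Finset.univ : Finset E) \ {A, B} := by rw [hs]; simp
  simp only [Finset.mem_sdiff, Finset.mem_univ, true_and, Finset.mem_insert,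
    Finset.mem_singleton, not_or] at hCmem hDmem
  obtain ⟨hCA, hCB⟩ := hCmem
  obtain ⟨hDA, hDB⟩ := hDmem
  have hcov : ∀ p : E, p = A ∨ p = B ∨ p = C ∨ p = D := by
    intro p
    by_cases h1 : p = A
    · exact Or.inl h1
    by_cases h2 : p = B
    · exact Or.inr (Or.inl h2)
    have hp : p ∈ (Finset.univ : Finset E) \ {A, B} := by simp [h1, h2]
    rw [hs] at hp
    simp only [Finset.mem_insert, Finset.mem_singleton] at hp
    tauto
  have hkC := key C (fun h => hCA h) (fun h => hCB h)
  have hkD := key D (fun h => hDA h) (fun h => hDB h)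
  have hcpos : 0 < dist A C := dist_pos.2 (fun h => hCA h.symm)
  have hdpos : 0 < dist A D := dist_pos.2 (fun h => hDA h.symm)
  -- the isometric case
  have isoCase : (dist C D = dist A C - dist A D ∨ dist C D = dist A D - dist A C) →
      (∃ φ : E → ℝ, Isometry φ) := by
    intro hlin
    have hcov' : ∀ p : E, A = p ∨ B = p ∨ C = p ∨ D = p := by
      intro p
      rcases hcov p with h | h | h | h <;> simp [h]
    refine ⟨fun p => dist A p, Isometry.of_dist_eq ?_⟩
    intro p q
    rcases hcov' p with rfl | rfl | rfl | rfl <;> rcases hcov' q with rfl | rfl | rfl | rfl <;>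
      simp only [Real.dist_eq] <;>
      rw [abs_eq dist_nonneg] <;>
      rcases hlin with hl | hl <;>
      first
        | (left;
            linarith [dist_comm A B, dist_comm A C, dist_comm A D, dist_comm B C,
              dist_comm B D, dist_comm C D, dist_self A, dist_self B, dist_self C,
              dist_self D, hkC, hkD, hl])
        | (right;
            linarith [dist_comm A B, dist_comm A C, dist_comm A D, dist_comm B C,
              dist_comm B D, dist_comm C D, dist_self A, dist_self B, dist_self C,
              dist_self D, hkC, hkD, hl])
  rcases htri C A D with h1 | h1 | h1
  · exact Or.inl (isoCase (Or.inl (by linarith [dist_comm C A, dist_comm D C])))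
  · exact Or.inl (isoCase (Or.inr (by linarith [dist_comm C A, dist_comm D C])))
  · -- h1 : dist D C = dist C A + dist A D
    rcases htri C B D with h2 | h2 | h2
    · exfalso
      linarith [dist_comm C A, dist_comm D C, dist_comm C B, dist_comm B D, hkC, hkD, hcpos]
    · exfalso
      linarith [dist_comm C A, dist_comm D C, dist_comm C B, dist_comm B D, hkC, hkD, hdpos]
    · -- h2 : dist D C = dist C B + dist B D
      have hMce : dist A C + dist A D = dist A B := by
        linarith [dist_comm C A, dist_comm C B, dist_comm B D, hkC, hkD]
      refine Or.inr ⟨dist A B, dist A D, hMpos, hdpos, ?_, A, B, C, D, hcov, hAB,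
        (fun h => hCA h.symm), (fun h => hDA h.symm), (fun h => hCB h.symm),
        (fun h => hDB h.symm), hCD, rfl, ?_, rfl, ?_, ?_, ?_⟩
      · intro h
        have := hcpos
        linarith
      · linarith [dist_comm C D, dist_comm C A]
      · linarith [dist_comm B C, hkC]
      · rw [abs_of_nonneg (by linarith [hcpos.le])]
        linarith
      · rw [abs_of_nonneg (by linarith [hcpos.le])]
        linarith [dist_comm B D, hkD]
end

section
/- Let H be a real inner product space and S a set of unit vectors in H such that |⟨x,y⟩| < 1 for all distinct x,y ∈ S and S is projection-invariant. If x₁, x₂ ∈ S satisfy ⟨x₁,x₂⟩ = 0, then for every y ∈ S one has ⟨x₁,y⟩ = 0 or ⟨x₂,y⟩ = 0. -/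
open RealInnerProductSpace

/-- The spherical projection of `y` to the hyperplane orthogonal to the unit vector `s₀`:
`p_{s₀}(y) = (y − ⟨s₀,y⟩ s₀)/√(1 − ⟨s₀,y⟩²)`. -/
noncomputable def sphProj {H : Type*} [NormedAddCommGroup H] [InnerProductSpace ℝ H]
    (s₀ y : H) : H :=
  (Real.sqrt (1 - ⟪s₀, y⟫ ^ 2))⁻¹ • (y - ⟪s₀, y⟫ • s₀)

/-- A set `S` of unit vectors in a real inner product space is *projection-invariant*
if for every `s₀ ∈ S` and all `x, y ∈ S` with `|⟨x,s₀⟩| < 1` and `|⟨y,s₀⟩| < 1` one has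
`|⟨p_{s₀}(x), p_{s₀}(y)⟩| = |⟨x,y⟩|`. -/
def ProjInvariant {H : Type*} [NormedAddCommGroup H] [InnerProductSpace ℝ H]
    (S : Set H) : Prop :=
  ∀ s₀ ∈ S, ∀ x ∈ S, ∀ y ∈ S, |⟪x, s₀⟫| < 1 → |⟪y, s₀⟫| < 1 →
    |⟪sphProj s₀ x, sphProj s₀ y⟫| = |⟪x, y⟫|

/-- If a projection-invariant set of unit vectors contains two orthogonal elements
`x₁, x₂`, then every element of the set is orthogonal to `x₁` or to `x₂`. -/
theorem stmt5 {H : Type*} [NormedAddCommGroup H] [InnerProductSpace ℝ H]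
    (S : Set H) (hunit : ∀ s ∈ S, ‖s‖ = 1)
    (hlt : ∀ x ∈ S, ∀ y ∈ S, x ≠ y → |⟪x, y⟫| < 1)
    (hproj : ProjInvariant S)
    (x₁ x₂ : H) (hx₁ : x₁ ∈ S) (hx₂ : x₂ ∈ S) (horth : ⟪x₁, x₂⟫ = 0) :
    ∀ y ∈ S, ⟪x₁, y⟫ = 0 ∨ ⟪x₂, y⟫ = 0 := by
  intro y hy
  by_cases h1 : y = x₁
  · right
    rw [h1, real_inner_comm, horth]
  by_cases h2 : y = x₂
  · left
    rw [h2, horth]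
  by_cases hb : ⟪x₂, y⟫ = 0
  · exact Or.inr hb
  left
  have ha : |⟪y, x₁⟫| < 1 := hlt y hy x₁ hx₁ h1
  have hb0 : |⟪x₂, x₁⟫| < 1 := by
    rw [real_inner_comm, horth]; norm_num
  have key := hproj x₁ hx₁ x₂ hx₂ y hy hb0 ha
  have e1 : sphProj x₁ x₂ = x₂ := by
    simp [sphProj, horth]
  set a := ⟪x₁, y⟫ with hadef
  have hax : a ^ 2 < 1 := by
    have := abs_lt.mp ha
    rw [real_inner_comm] at this
    nlinarith [this.1, this.2]
  have horth' : ⟪x₂, x₁⟫ = (0:ℝ) := by rw [real_inner_comm]; exact horth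
  have hs : Real.sqrt (1 - a ^ 2) > 0 := Real.sqrt_pos.mpr (by linarith)
  have e2 : ⟪sphProj x₁ x₂, sphProj x₁ y⟫ = (Real.sqrt (1 - a ^ 2))⁻¹ * ⟪x₂, y⟫ := by
    rw [e1, sphProj, real_inner_smul_right, inner_sub_right, real_inner_smul_right, horth']
    ring
  rw [e2, abs_mul, abs_inv, abs_of_pos hs] at key
  have hbpos : |⟪x₂, y⟫| > 0 := abs_pos.mpr hb
  have hsq : Real.sqrt (1 - a ^ 2) = 1 := by
    have hinv : (Real.sqrt (1 - a ^ 2))⁻¹ = 1 := by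
      have := mul_right_cancel₀ (ne_of_gt hbpos) (key.trans (one_mul _).symm)
      exact this
    rw [inv_eq_one] at hinv
    exact hinv
  have : 1 - a ^ 2 = 1 := by
    have := Real.sq_sqrt (by linarith : (0:ℝ) ≤ 1 - a ^ 2)
    rw [hsq] at this; linarith
  have : a ^ 2 = 0 := by linarith
  exact pow_eq_zero_iff (by norm_num) |>.mp this
end

section
/- Let H be a real inner product space and S a set of unit vectors in H such that |⟨x,y⟩| < 1 for all distinct x,y ∈ S and S is projection-invariant. Then the relation on S defined by x ~ y if and only if ⟨x,y⟩ ≠ 0 is transitive (and hence, being reflexive and symmetric, an equivalence relation on S). -/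
open RealInnerProductSpace

/-- On a projection-invariant set of unit vectors, the relation
`x ~ y ↔ ⟨x,y⟩ ≠ 0` is transitive (hence, being reflexive and symmetric,
an equivalence relation). -/
theorem stmt6 {H : Type*} [NormedAddCommGroup H] [InnerProductSpace ℝ H]
    (S : Set H) (hunit : ∀ s ∈ S, ‖s‖ = 1)
    (hlt : ∀ x ∈ S, ∀ y ∈ S, x ≠ y → |⟪x, y⟫| < 1)
    (hproj : ProjInvariant S) :
    ∀ x ∈ S, ∀ y ∈ S, ∀ z ∈ S, ⟪x, y⟫ ≠ 0 → ⟪y, z⟫ ≠ 0 → ⟪x, z⟫ ≠ 0 := by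
  intro x hx y hy z hz hxy hyz hxz
  rcases eq_or_ne x y with rfl | hxney
  · exact hyz hxz
  rcases eq_or_ne z y with rfl | hzney
  · exact hxy hxz
  have hyy : ⟪y, y⟫ = (1 : ℝ) := by
    have := real_inner_self_eq_norm_sq y
    rw [hunit y hy] at this; simpa using this
  have hxy1 : |⟪x, y⟫| < 1 := hlt x hx y hy hxney
  have hzy1 : |⟪z, y⟫| < 1 := hlt z hz y hy hzney
  have key := hproj y hy x hx z hz hxy1 hzy1
  have hyx : ⟪y, x⟫ = ⟪x, y⟫ := real_inner_comm x y
  have hzy : ⟪y, z⟫ = ⟪z, y⟫ := real_inner_comm z y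
  have ha : (0 : ℝ) < Real.sqrt (1 - ⟪x, y⟫ ^ 2) := by
    apply Real.sqrt_pos.mpr
    nlinarith [abs_nonneg ⟪x, y⟫, sq_abs ⟪x, y⟫]
  have hb : (0 : ℝ) < Real.sqrt (1 - ⟪y, z⟫ ^ 2) := by
    apply Real.sqrt_pos.mpr
    rw [hzy]
    nlinarith [abs_nonneg ⟪z, y⟫, sq_abs ⟪z, y⟫]
  have hcomp : ⟪sphProj y x, sphProj y z⟫ =
      (Real.sqrt (1 - ⟪x, y⟫ ^ 2))⁻¹ * ((Real.sqrt (1 - ⟪y, z⟫ ^ 2))⁻¹ *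
        (⟪x, z⟫ - ⟪x, y⟫ * ⟪y, z⟫)) := by
    simp only [sphProj, inner_smul_left, inner_smul_right, inner_sub_left,
      inner_sub_right, RCLike.star_def, starRingEnd_apply, star_trivial, hyy, hyx]
    ring
  rw [hcomp, hxz] at key
  rw [abs_mul, abs_mul, abs_inv, abs_inv, abs_of_pos ha, abs_of_pos hb, abs_zero] at key
  have h2 : ⟪x, y⟫ * ⟪y, z⟫ = 0 := by
    rcases mul_eq_zero.mp key with h | h
    · exact absurd h (inv_pos.mpr ha).ne'
    rcases mul_eq_zero.mp h with h | h
    · exact absurd h (inv_pos.mpr hb).ne'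
    simpa using abs_eq_zero.mp h
  exact mul_ne_zero hxy hyz h2
end

section
/- Let H be a real inner product space and T a projection-invariant set of unit vectors in H such that |⟨x,y⟩| < 1 for all distinct x,y ∈ T and ⟨x,y⟩ ≠ 0 for all x,y ∈ T. Suppose there is s₀ ∈ T with ⟨x,s₀⟩ > 0 for every x ∈ T. Then ⟨x,y⟩ > 0 for all x,y ∈ T. -/
open RealInnerProductSpace

set_option maxHeartbeats 1000000 in
/-- Let `T` be a projection-invariant set of unit vectors with `|⟨x,y⟩| < 1` for all
distinct `x, y ∈ T` and `⟨x,y⟩ ≠ 0` for all `x, y ∈ T`. If some `s₀ ∈ T` satisfies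
`⟨x,s₀⟩ > 0` for every `x ∈ T`, then `⟨x,y⟩ > 0` for all `x, y ∈ T`. -/
theorem stmt7 {H : Type*} [NormedAddCommGroup H] [InnerProductSpace ℝ H]
    (T : Set H) (hunit : ∀ s ∈ T, ‖s‖ = 1)
    (hlt : ∀ x ∈ T, ∀ y ∈ T, x ≠ y → |⟪x, y⟫| < 1)
    (hne : ∀ x ∈ T, ∀ y ∈ T, ⟪x, y⟫ ≠ 0)
    (hproj : ProjInvariant T)
    (s₀ : H) (hs₀ : s₀ ∈ T) (hpos : ∀ x ∈ T, ⟪x, s₀⟫ > 0) :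
    ∀ x ∈ T, ∀ y ∈ T, ⟪x, y⟫ > 0 := by
  intro x hx y hy
  by_cases hxy : x = y
  · subst hxy
    rw [real_inner_self_eq_norm_sq, hunit x hx]; norm_num
  by_cases hxs : x = s₀
  · subst hxs
    rw [real_inner_comm]; exact hpos y hy
  by_cases hys : y = s₀
  · subst hys; exact hpos x hx
  set a := ⟪x, s₀⟫ with ha_def
  set b := ⟪y, s₀⟫ with hb_def
  set c := ⟪x, y⟫ with hc_def
  have ha : 0 < a := hpos x hx
  have hb : 0 < b := hpos y hy
  have ha1 : |a| < 1 := hlt x hx s₀ hs₀ hxs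
  have hb1 : |b| < 1 := hlt y hy s₀ hs₀ hys
  have hc : c ≠ 0 := hne x hx y hy
  have key := hproj s₀ hs₀ x hx y hy ha1 hb1
  have hs0 : ⟪s₀, s₀⟫ = (1:ℝ) := by
    rw [real_inner_self_eq_norm_sq, hunit s₀ hs₀]; norm_num
  have hsa : ⟪s₀, x⟫ = a := real_inner_comm _ _
  have hsb : ⟪s₀, y⟫ = b := real_inner_comm _ _
  have hinner : ⟪x - a • s₀, y - b • s₀⟫ = c - a * b := by
    simp only [inner_sub_left, inner_sub_right, real_inner_smul_left,
      real_inner_smul_right, hs0, hsa, hsb]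
    ring
  have hproj_inner : ⟪sphProj s₀ x, sphProj s₀ y⟫ =
      (Real.sqrt (1 - a ^ 2))⁻¹ * ((Real.sqrt (1 - b ^ 2))⁻¹ * (c - a * b)) := by
    simp only [sphProj, hsa, hsb, real_inner_smul_left, real_inner_smul_right, hinner]
    ring
  have ha2 : a ^ 2 < 1 := by nlinarith [abs_lt.mp ha1]
  have hb2 : b ^ 2 < 1 := by nlinarith [abs_lt.mp hb1]
  have hka : 0 < Real.sqrt (1 - a ^ 2) := Real.sqrt_pos.mpr (by linarith)
  have hkb : 0 < Real.sqrt (1 - b ^ 2) := Real.sqrt_pos.mpr (by linarith)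
  have hka1 : Real.sqrt (1 - a ^ 2) ≤ 1 := Real.sqrt_le_one.mpr (by nlinarith)
  have hkb1 : Real.sqrt (1 - b ^ 2) ≤ 1 := Real.sqrt_le_one.mpr (by nlinarith)
  have hka1' : 1 ≤ (Real.sqrt (1 - a ^ 2))⁻¹ := by
    rw [le_inv_comm₀ one_pos hka]; simpa using hka1
  have hkb1' : 1 ≤ (Real.sqrt (1 - b ^ 2))⁻¹ := by
    rw [le_inv_comm₀ one_pos hkb]; simpa using hkb1
  rw [hproj_inner, abs_mul, abs_mul, abs_of_pos (inv_pos.mpr hka),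
    abs_of_pos (inv_pos.mpr hkb)] at key
  by_contra h
  push_neg at h
  have hclt : c < 0 := h.lt_of_ne hc
  have habs1 : |c - a * b| = a * b - c := by
    rw [abs_of_neg (by nlinarith)]; ring
  have habs2 : |c| = -c := abs_of_neg hclt
  rw [habs1, habs2] at key
  have hab : (0:ℝ) < a * b - c := by nlinarith
  have h1 : a * b - c ≤ (Real.sqrt (1 - b ^ 2))⁻¹ * (a * b - c) :=
    le_mul_of_one_le_left hab.le hkb1'
  have h2 : (Real.sqrt (1 - b ^ 2))⁻¹ * (a * b - c) ≤
      (Real.sqrt (1 - a ^ 2))⁻¹ * ((Real.sqrt (1 - b ^ 2))⁻¹ * (a * b - c)) :=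
    le_mul_of_one_le_left (by positivity) hka1'
  nlinarith [mul_pos ha hb]
end

section
/- Let H be a real inner product space and T a projection-invariant set of unit vectors in H such that 0 < ⟨x,y⟩ < 1 for all distinct x,y ∈ T. Then the function d(x,y) := log((1 + √(1 − ⟨x,y⟩²))/⟨x,y⟩) (equivalently, d(x,y) = arccosh(1/⟨x,y⟩), so that ⟨x,y⟩ = 1/cosh(d(x,y))) defines a metric on T, and the metric space (T,d) satisfies the triangle equality. -/
open RealInnerProductSpace

private lemma cosh_key8 {t : ℝ} (h0 : 0 < t) (h1 : t ≤ 1) :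
    Real.cosh (Real.log ((1 + Real.sqrt (1 - t ^ 2)) / t)) = 1 / t := by
  have hnn : (0:ℝ) ≤ 1 - t ^ 2 := by nlinarith
  have hs : Real.sqrt (1 - t ^ 2) ^ 2 = 1 - t ^ 2 := Real.sq_sqrt hnn
  have hs0 : (0:ℝ) ≤ Real.sqrt (1 - t ^ 2) := Real.sqrt_nonneg _
  set s := Real.sqrt (1 - t ^ 2) with hsdef
  have hu : 0 < (1 + s) / t := by positivity
  rw [Real.cosh_log hu]
  have h1s : (0:ℝ) < 1 + s := by positivity
  field_simp
  nlinarith [hs]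

private lemma sinh_key8 {t : ℝ} (h0 : 0 < t) (h1 : t ≤ 1) :
    Real.sinh (Real.log ((1 + Real.sqrt (1 - t ^ 2)) / t)) = Real.sqrt (1 - t ^ 2) / t := by
  have hnn : (0:ℝ) ≤ 1 - t ^ 2 := by nlinarith
  have hs : Real.sqrt (1 - t ^ 2) ^ 2 = 1 - t ^ 2 := Real.sq_sqrt hnn
  have hs0 : (0:ℝ) ≤ Real.sqrt (1 - t ^ 2) := Real.sqrt_nonneg _
  set s := Real.sqrt (1 - t ^ 2) with hsdef
  have hu : 0 < (1 + s) / t := by positivity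
  rw [Real.sinh_log hu]
  have h1s : (0:ℝ) < 1 + s := by positivity
  field_simp
  nlinarith [hs]

private lemma dpos_key8 {t : ℝ} (h0 : 0 < t) (h1 : t < 1) :
    0 < Real.log ((1 + Real.sqrt (1 - t ^ 2)) / t) := by
  apply Real.log_pos
  have hs0 : (0:ℝ) ≤ Real.sqrt (1 - t ^ 2) := Real.sqrt_nonneg _
  rw [lt_div_iff₀ h0]
  nlinarith

private lemma cosh_eq_abs8 {u v : ℝ} (h : Real.cosh u = Real.cosh v) : |u| = |v| :=
  le_antisymm (Real.cosh_le_cosh.mp h.le) (Real.cosh_le_cosh.mp h.ge)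

private lemma proj_inner8 {H : Type*} [NormedAddCommGroup H] [InnerProductSpace ℝ H]
    (x y z : H) (hz : ⟪z, z⟫ = (1:ℝ)) :
    ⟪sphProj z x, sphProj z y⟫ =
      (Real.sqrt (1 - ⟪z, x⟫ ^ 2))⁻¹ * (Real.sqrt (1 - ⟪z, y⟫ ^ 2))⁻¹ *
        (⟪x, y⟫ - ⟪z, x⟫ * ⟪z, y⟫) := by
  simp only [sphProj, real_inner_smul_left, real_inner_smul_right, inner_sub_left,
    inner_sub_right, hz, real_inner_comm x z]
  ring

/-- On a projection-invariant set `T` of unit vectors with `0 < ⟨x,y⟩ < 1` for all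
distinct `x, y ∈ T`, the function
`d(x,y) = log((1 + √(1 − ⟨x,y⟩²))/⟨x,y⟩) = arccosh(1/⟨x,y⟩)`
(so that `⟨x,y⟩ = 1/cosh(d(x,y))`) is a metric on `T`, and the metric space `(T,d)`
satisfies the triangle equality. -/
theorem stmt8 {H : Type*} [NormedAddCommGroup H] [InnerProductSpace ℝ H]
    (T : Set H) (hunit : ∀ s ∈ T, ‖s‖ = 1)
    (hpos : ∀ x ∈ T, ∀ y ∈ T, x ≠ y → 0 < ⟪x, y⟫ ∧ ⟪x, y⟫ < 1)
    (hproj : ProjInvariant T)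
    (d : H → H → ℝ)
    (hd : ∀ x y : H, d x y = Real.log ((1 + Real.sqrt (1 - ⟪x, y⟫ ^ 2)) / ⟪x, y⟫)) :
    -- `d` recovers the inner product via `⟨x,y⟩ = 1/cosh(d(x,y))`
    (∀ x ∈ T, ∀ y ∈ T, ⟪x, y⟫ = 1 / Real.cosh (d x y)) ∧
    -- `d` is a metric on `T`
    (∀ x ∈ T, ∀ y ∈ T, (d x y = 0 ↔ x = y)) ∧
    (∀ x ∈ T, ∀ y ∈ T, d x y = d y x) ∧
    (∀ x ∈ T, ∀ y ∈ T, 0 ≤ d x y) ∧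
    (∀ x ∈ T, ∀ y ∈ T, ∀ z ∈ T, d x z ≤ d x y + d y z) ∧
    -- `(T, d)` satisfies the triangle equality
    (∀ x ∈ T, ∀ y ∈ T, ∀ z ∈ T,
      d x y = d y z + d z x ∨ d y z = d x y + d z x ∨ d z x = d x y + d y z) := by
  -- self inner products are 1
  have hself : ∀ x ∈ T, ⟪x, x⟫ = (1:ℝ) := by
    intro x hx
    rw [real_inner_self_eq_norm_sq, hunit x hx]; norm_num
  -- d is symmetric (unconditionally)
  have dsym : ∀ x y : H, d x y = d y x := by
    intro x y; rw [hd, hd, real_inner_comm]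
  -- d x x = 0
  have ddiag : ∀ x ∈ T, d x x = 0 := by
    intro x hx
    rw [hd, hself x hx]
    norm_num
  -- part 1: inner product recovery
  have part1 : ∀ x ∈ T, ∀ y ∈ T, ⟪x, y⟫ = 1 / Real.cosh (d x y) := by
    intro x hx y hy
    by_cases hxy : x = y
    · subst hxy
      rw [ddiag x hx, hself x hx, Real.cosh_zero]; norm_num
    · obtain ⟨h0, h1⟩ := hpos x hx y hy hxy
      rw [hd, cosh_key8 h0 h1.le, one_div_one_div]
  -- sinh of d
  have hsinh : ∀ x ∈ T, ∀ y ∈ T, x ≠ y →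
      Real.sinh (d x y) = Real.sqrt (1 - ⟪x, y⟫ ^ 2) / ⟪x, y⟫ := by
    intro x hx y hy hxy
    obtain ⟨h0, h1⟩ := hpos x hx y hy hxy
    rw [hd, sinh_key8 h0 h1.le]
  -- nonnegativity
  have dnonneg : ∀ x ∈ T, ∀ y ∈ T, 0 ≤ d x y := by
    intro x hx y hy
    by_cases hxy : x = y
    · subst hxy; rw [ddiag x hx]
    · obtain ⟨h0, h1⟩ := hpos x hx y hy hxy
      rw [hd]; exact (dpos_key8 h0 h1).le
  -- zero iff equal
  have dzero : ∀ x ∈ T, ∀ y ∈ T, (d x y = 0 ↔ x = y) := by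
    intro x hx y hy
    constructor
    · intro h
      by_contra hxy
      obtain ⟨h0, h1⟩ := hpos x hx y hy hxy
      have := dpos_key8 h0 h1
      rw [← hd x y] at this
      linarith
    · intro h; subst h; exact ddiag x hx
  -- triangle equality
  have triEq : ∀ x ∈ T, ∀ y ∈ T, ∀ z ∈ T,
      d x y = d y z + d z x ∨ d y z = d x y + d z x ∨ d z x = d x y + d y z := by
    intro x hx y hy z hz
    by_cases hxy : x = y
    · subst hxy
      right; left
      rw [ddiag x hx, dsym z x]; ring
    by_cases hyz : y = z
    · subst hyz
      left
      rw [ddiag y hy, dsym x y]; ring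
    by_cases hzx : z = x
    · subst hzx
      left
      rw [ddiag z hz, dsym y z]; ring
    -- main case: all distinct
    obtain ⟨hb0, hb1⟩ := hpos z hz x hx (fun h => hzx h)
    obtain ⟨ha0, ha1⟩ := hpos z hz y hy (fun h => hyz h.symm)
    obtain ⟨hc0, hc1⟩ := hpos x hx y hy hxy
    set a := ⟪z, y⟫ with hadef
    set b := ⟪z, x⟫ with hbdef
    set c := ⟪x, y⟫ with hcdef
    have hxz : |⟪x, z⟫| < 1 := by
      rw [real_inner_comm, ← hbdef, abs_of_pos hb0]; exact hb1
    have hyz' : |⟪y, z⟫| < 1 := by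
      rw [real_inner_comm, ← hadef, abs_of_pos ha0]; exact ha1
    have hPI := hproj z hz x hx y hy hxz hyz'
    rw [proj_inner8 x y z (hself z hz)] at hPI
    have hsa : (0:ℝ) ≤ Real.sqrt (1 - a ^ 2) := Real.sqrt_nonneg _
    have hsb : (0:ℝ) ≤ Real.sqrt (1 - b ^ 2) := Real.sqrt_nonneg _
    have hsa' : (0:ℝ) < Real.sqrt (1 - a ^ 2) := Real.sqrt_pos.mpr (by nlinarith)
    have hsb' : (0:ℝ) < Real.sqrt (1 - b ^ 2) := Real.sqrt_pos.mpr (by nlinarith)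
    rw [abs_mul, abs_mul, abs_of_pos (inv_pos.mpr hsb'), abs_of_pos (inv_pos.mpr hsa'),
      abs_of_pos hc0] at hPI
    -- hPI : (√(1-b²))⁻¹ * (√(1-a²))⁻¹ * |c - b*a| = c
    have habs : |c - b * a| = Real.sqrt (1 - b ^ 2) * Real.sqrt (1 - a ^ 2) * c := by
      have := hPI
      field_simp at this
      linarith [this]
    -- hyperbolic quantities
    set A := d y z with hAdef
    set B := d x z with hBdef
    set C := d x y with hCdef
    have hA0 : 0 ≤ A := dnonneg y hy z hz
    have hB0 : 0 ≤ B := dnonneg x hx z hz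
    have hC0 : 0 ≤ C := dnonneg x hx y hy
    have hcoshA : Real.cosh A = 1 / a := by
      have := part1 y hy z hz
      rw [real_inner_comm, ← hadef] at this
      rw [← hAdef] at this
      rw [this]; rw [one_div_one_div]
    have hcoshB : Real.cosh B = 1 / b := by
      have := part1 x hx z hz
      rw [real_inner_comm, ← hbdef] at this
      rw [← hBdef] at this
      rw [this]; rw [one_div_one_div]
    have hcoshC : Real.cosh C = 1 / c := by
      have := part1 x hx y hy
      rw [← hcdef, ← hCdef] at this
      rw [this]; rw [one_div_one_div]
    have hsinhA : Real.sinh A = Real.sqrt (1 - a ^ 2) / a := by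
      have := hsinh y hy z hz (fun h => hyz h)
      rw [real_inner_comm, ← hadef, ← hAdef] at this
      exact this
    have hsinhB : Real.sinh B = Real.sqrt (1 - b ^ 2) / b := by
      have := hsinh x hx z hz (fun h => hzx h.symm)
      rw [real_inner_comm, ← hbdef, ← hBdef] at this
      exact this
    -- the key hyperbolic identity
    have hkey : |Real.cosh A * Real.cosh B - Real.cosh C| =
        Real.sinh A * Real.sinh B := by
      rw [hcoshA, hcoshB, hcoshC, hsinhA, hsinhB]
      have h1 : 1 / a * (1 / b) - 1 / c = (c - b * a) / (a * b * c) := by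
        field_simp
      rw [h1, abs_div, abs_of_pos (by positivity : (0:ℝ) < a * b * c), habs]
      field_simp
    rcases abs_cases (Real.cosh A * Real.cosh B - Real.cosh C) with ⟨heq, _⟩ | ⟨heq, _⟩
    · -- cosh C = cosh A cosh B - sinh A sinh B = cosh (A - B)
      have hCeq : Real.cosh C = Real.cosh (A - B) := by
        rw [Real.cosh_sub]; linarith [hkey, heq]
      have habsC : |C| = |A - B| := cosh_eq_abs8 hCeq
      rw [abs_of_nonneg hC0] at habsC
      rcases le_total B A with hBA | hAB
      · -- C = A - B, i.e. A = C + B : d y z = d x y + d z x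
        right; left
        rw [abs_of_nonneg (by linarith)] at habsC
        rw [dsym z x, ← hBdef]
        linarith
      · -- C = B - A, i.e. B = C + A : d z x = d x y + d y z
        right; right
        rw [abs_of_nonpos (by linarith), neg_sub] at habsC
        rw [dsym z x, ← hBdef]
        linarith
    · -- cosh C = cosh A cosh B + sinh A sinh B = cosh (A + B)
      have hCeq : Real.cosh C = Real.cosh (A + B) := by
        rw [Real.cosh_add]; linarith [hkey, heq]
      have habsC : |C| = |A + B| := cosh_eq_abs8 hCeq
      rw [abs_of_nonneg hC0, abs_of_nonneg (by linarith)] at habsC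
      left
      rw [dsym z x, ← hBdef]
      linarith
  -- triangle inequality from triangle equality
  have triIneq : ∀ x ∈ T, ∀ y ∈ T, ∀ z ∈ T, d x z ≤ d x y + d y z := by
    intro x hx y hy z hz
    have h := triEq x hx y hy z hz
    have h1 := dnonneg x hx y hy
    have h2 := dnonneg y hy z hz
    have h3 : d x z = d z x := dsym x z
    rcases h with h | h | h <;> linarith
  exact ⟨part1, dzero, fun x _ y _ => dsym x y, dnonneg, triIneq, triEq⟩
end

section
/- Let H be a real inner product space and h: ℝ → H a map satisfying ⟨h(s),h(t)⟩ = 1/cosh(t−s) for all s,t ∈ ℝ (in particular each h(t) is a unit vector). Then for all real numbers s₀, x, y with x ≠ s₀ and y ≠ s₀, one has |⟨p_{h(s₀)}(h(x)), p_{h(s₀)}(h(y))⟩| = 1/cosh(x−y); in particular, the set {h(t) : t ∈ ℝ} is projection-invariant. -/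
open RealInnerProductSpace

/-!
For a unit vector `s₀`, `⟨p_{s₀}(x), p_{s₀}(y)⟩ = (⟨x,y⟩ − ⟨s₀,x⟩⟨s₀,y⟩) / (√(1−⟨s₀,x⟩²) √(1−⟨s₀,y⟩²))`.
On the helix, with `u = x − s₀` and `v = y − s₀`, the square roots are `|tanh u|` and `|tanh v|`,
while the addition formula `cosh (v − u) = cosh u cosh v − sinh u sinh v` turns the numerator
into `tanh u tanh v / cosh (v − u)`; so the quotient is `± 1 / cosh (y − x)`.
-/

lemma inner_sphProj_sphProj {H : Type*} [NormedAddCommGroup H] [InnerProductSpace ℝ H]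
    {s₀ : H} (hs : ⟪s₀, s₀⟫ = 1) (x y : H) :
    ⟪sphProj s₀ x, sphProj s₀ y⟫ =
      (⟪x, y⟫ - ⟪s₀, x⟫ * ⟪s₀, y⟫) / (√(1 - ⟪s₀, x⟫ ^ 2) * √(1 - ⟪s₀, y⟫ ^ 2)) := by
  simp only [sphProj, real_inner_smul_left, real_inner_smul_right, inner_sub_left,
    inner_sub_right, hs, real_inner_comm x s₀]
  field_simp
  ring

namespace Real

lemma tanh_eq_zero {x : ℝ} : tanh x = 0 ↔ x = 0 := by
  simp [tanh_eq_sinh_div_cosh, (cosh_pos x).ne']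

lemma sqrt_one_sub_inv_cosh_sq (t : ℝ) : √(1 - (cosh t)⁻¹ ^ 2) = |tanh t| := by
  rw [← sqrt_sq_eq_abs, tanh_eq_sinh_div_cosh]
  congr 1
  field_simp
  linarith [cosh_sq_sub_sinh_sq t]

lemma inv_cosh_sub_sub_inv_cosh_mul_inv_cosh (u v : ℝ) :
    (cosh (v - u))⁻¹ - (cosh u)⁻¹ * (cosh v)⁻¹ = tanh u * tanh v / cosh (v - u) := by
  have hw : cosh (v - u) ≠ 0 := (cosh_pos _).ne'
  rw [tanh_eq_sinh_div_cosh, tanh_eq_sinh_div_cosh]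
  field_simp
  rw [cosh_sub]
  ring

end Real

lemma abs_inner_sphProj_of_inner_eq_inv_cosh {H : Type*} [NormedAddCommGroup H]
    [InnerProductSpace ℝ H] {h : ℝ → H} (hh : ∀ s t : ℝ, ⟪h s, h t⟫ = (Real.cosh (t - s))⁻¹)
    {s₀ x y : ℝ} (hx : x ≠ s₀) (hy : y ≠ s₀) :
    |⟪sphProj (h s₀) (h x), sphProj (h s₀) (h y)⟫| = (Real.cosh (x - y))⁻¹ := by
  have hs : ⟪h s₀, h s₀⟫ = 1 := by rw [hh, sub_self, Real.cosh_zero, inv_one]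
  have htanh : Real.tanh (x - s₀) * Real.tanh (y - s₀) ≠ 0 :=
    mul_ne_zero (Real.tanh_eq_zero.not.2 (sub_ne_zero.2 hx))
      (Real.tanh_eq_zero.not.2 (sub_ne_zero.2 hy))
  have hnum := Real.inv_cosh_sub_sub_inv_cosh_mul_inv_cosh (x - s₀) (y - s₀)
  rw [sub_sub_sub_cancel_right] at hnum
  rw [inner_sphProj_sphProj hs, hh, hh, hh, Real.sqrt_one_sub_inv_cosh_sq,
    Real.sqrt_one_sub_inv_cosh_sq, hnum, ← abs_mul, abs_div, abs_div, abs_abs,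
    div_right_comm, div_self (abs_ne_zero.2 htanh), abs_of_pos (Real.cosh_pos _), one_div,
    ← Real.cosh_neg, neg_sub]

/-- The helix `h : ℝ → H` with `⟨h(s),h(t)⟩ = 1/cosh(t−s)` does not change the
(absolute values of) inner products under spherical projections: for `x ≠ s₀` and
`y ≠ s₀`, `|⟨p_{h(s₀)}(h(x)), p_{h(s₀)}(h(y))⟩| = 1/cosh(x−y)`; in particular, the
set `{h(t) : t ∈ ℝ}` is projection-invariant. -/
theorem stmt9 {H : Type*} [NormedAddCommGroup H] [InnerProductSpace ℝ H]
    (h : ℝ → H) (hh : ∀ s t : ℝ, ⟪h s, h t⟫ = 1 / Real.cosh (t - s)) :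
    (∀ s₀ x y : ℝ, x ≠ s₀ → y ≠ s₀ →
      |⟪sphProj (h s₀) (h x), sphProj (h s₀) (h y)⟫| = 1 / Real.cosh (x - y)) ∧
    ProjInvariant (Set.range h) := by
  simp only [one_div] at hh ⊢
  have hinv := fun s₀ x y (hx : x ≠ s₀) (hy : y ≠ s₀) ↦
    abs_inner_sphProj_of_inner_eq_inv_cosh hh hx hy
  refine ⟨hinv, ?_⟩
  have ne_of_abs_inner_lt_one {a b : ℝ} (hab : |⟪h b, h a⟫| < 1) : b ≠ a := by
    rintro rfl
    rw [hh, sub_self, Real.cosh_zero, inv_one, abs_one] at hab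
    exact hab.false
  rintro _ ⟨a, rfl⟩ _ ⟨b, rfl⟩ _ ⟨c, rfl⟩ hb hc
  rw [hinv a b c (ne_of_abs_inner_lt_one hb) (ne_of_abs_inner_lt_one hc), hh,
    abs_of_pos (inv_pos.2 (Real.cosh_pos _)), ← Real.cosh_neg, neg_sub]
end

section
/- Let H be a real inner product space, let x, y be nonzero real numbers with x ≠ y, and let A, B, C, D be unit vectors in H satisfying ⟨A,B⟩ = ⟨C,D⟩ = 1/cosh(x), ⟨A,D⟩ = ⟨B,C⟩ = 1/cosh(y), ⟨A,C⟩ = ⟨B,D⟩ = 1/cosh(x−y). Then the set {A,B,C,D} is projection-invariant: for every s₀ ∈ {A,B,C,D} and all u, v ∈ {A,B,C,D} with u ≠ s₀ and v ≠ s₀, one has |⟨p_{s₀}(u), p_{s₀}(v)⟩| = |⟨u,v⟩|. -/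
open RealInnerProductSpace

section Aux
variable {H : Type*} [NormedAddCommGroup H] [InnerProductSpace ℝ H]

lemma sphProj_inner (s₀ u v : H) (hs : ‖s₀‖ = 1) :
    ⟪sphProj s₀ u, sphProj s₀ v⟫ =
      ((Real.sqrt (1 - ⟪s₀,u⟫^2))⁻¹ * (Real.sqrt (1 - ⟪s₀,v⟫^2))⁻¹) *
        (⟪u,v⟫ - ⟪s₀,u⟫*⟪s₀,v⟫) := by
  simp only [sphProj, inner_smul_left, inner_smul_right, inner_sub_left, inner_sub_right,
    real_inner_self_eq_norm_sq, hs, real_inner_comm u s₀, conj_trivial]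
  ring

lemma key (p q : ℝ) (hp : p ≠ 0) (hq : q ≠ 0) :
    |((Real.sqrt (1 - (1/Real.cosh p)^2))⁻¹ * (Real.sqrt (1 - (1/Real.cosh q)^2))⁻¹) *
      (1/Real.cosh (p - q) - (1/Real.cosh p)*(1/Real.cosh q))| = |1/Real.cosh (p - q)| := by
  have hcp := Real.cosh_pos p
  have hcq := Real.cosh_pos q
  have hcpq := Real.cosh_pos (p - q)
  have hsp : Real.sinh p ≠ 0 := by simpa [Real.sinh_eq_zero] using hp
  have hsq : Real.sinh q ≠ 0 := by simpa [Real.sinh_eq_zero] using hq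
  have h1 : ∀ r : ℝ, 1 - (1/Real.cosh r)^2 = (Real.sinh r / Real.cosh r)^2 := by
    intro r
    have := Real.cosh_sq r
    field_simp
    nlinarith [Real.cosh_pos r]
  have hd : 0 < Real.cosh p * Real.cosh q - Real.sinh p * Real.sinh q := by
    rw [← Real.cosh_sub]; exact hcpq
  have hsub : 1/Real.cosh (p-q) - (1/Real.cosh p)*(1/Real.cosh q)
      = Real.sinh p * Real.sinh q / (Real.cosh p * Real.cosh q * Real.cosh (p-q)) := by
    rw [Real.cosh_sub]
    field_simp
    ring
  rw [h1 p, h1 q, Real.sqrt_sq_eq_abs, Real.sqrt_sq_eq_abs, hsub, abs_div, abs_div,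
    abs_of_pos hcp, abs_of_pos hcq]
  have h2 : ((|Real.sinh p| / Real.cosh p)⁻¹ * (|Real.sinh q| / Real.cosh q)⁻¹) *
      (Real.sinh p * Real.sinh q / (Real.cosh p * Real.cosh q * Real.cosh (p-q)))
      = Real.sinh p * Real.sinh q / (|Real.sinh p| * |Real.sinh q| * Real.cosh (p-q)) := by
    have h3 : |Real.sinh p| ≠ 0 := abs_ne_zero.mpr hsp
    have h4 : |Real.sinh q| ≠ 0 := abs_ne_zero.mpr hsq
    field_simp
  rw [h2, abs_div, abs_mul,
    abs_of_pos (show (0:ℝ) < |Real.sinh p| * |Real.sinh q| * Real.cosh (p-q) by positivity),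
    abs_of_pos (show (0:ℝ) < 1/Real.cosh (p-q) by positivity)]
  field_simp

lemma main_case (s₀ u v : H) (hs : ‖s₀‖ = 1) (p q : ℝ) (hp : p ≠ 0) (hq : q ≠ 0)
    (h1 : ⟪s₀,u⟫ = 1/Real.cosh p) (h2 : ⟪s₀,v⟫ = 1/Real.cosh q)
    (h3 : ⟪u,v⟫ = 1/Real.cosh (p - q)) :
    |⟪sphProj s₀ u, sphProj s₀ v⟫| = |⟪u,v⟫| := by
  rw [sphProj_inner s₀ u v hs, h1, h2, h3]
  exact key p q hp hq

end Aux

/-- The exceptional four-point configuration (Example 1.4): if unit vectors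
`A, B, C, D` satisfy `⟨A,B⟩ = ⟨C,D⟩ = 1/cosh x`, `⟨A,D⟩ = ⟨B,C⟩ = 1/cosh y`,
`⟨A,C⟩ = ⟨B,D⟩ = 1/cosh(x−y)` with `x, y` nonzero and `x ≠ y`, then the set
`{A, B, C, D}` is projection-invariant. -/
theorem stmt11 {H : Type*} [NormedAddCommGroup H] [InnerProductSpace ℝ H]
    (x y : ℝ) (hx : x ≠ 0) (hy : y ≠ 0) (hxy : x ≠ y)
    (A B C D : H)
    (hA : ‖A‖ = 1) (hB : ‖B‖ = 1) (hC : ‖C‖ = 1) (hD : ‖D‖ = 1)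
    (hAB : ⟪A, B⟫ = 1 / Real.cosh x) (hCD : ⟪C, D⟫ = 1 / Real.cosh x)
    (hAD : ⟪A, D⟫ = 1 / Real.cosh y) (hBC : ⟪B, C⟫ = 1 / Real.cosh y)
    (hAC : ⟪A, C⟫ = 1 / Real.cosh (x - y)) (hBD : ⟪B, D⟫ = 1 / Real.cosh (x - y)) :
    ∀ s₀ ∈ ({A, B, C, D} : Set H), ∀ u ∈ ({A, B, C, D} : Set H),
      ∀ v ∈ ({A, B, C, D} : Set H), u ≠ s₀ → v ≠ s₀ →
        |⟪sphProj s₀ u, sphProj s₀ v⟫| = |⟪u, v⟫| := by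
  intro s₀ hs₀ u hu v hv hus hvs
  simp only [Set.mem_insert_iff, Set.mem_singleton_iff] at hs₀ hu hv
  have hz : x - y ≠ 0 := sub_ne_zero.mpr hxy
  have hnx : -x ≠ 0 := neg_ne_zero.mpr hx
  have hny : -y ≠ 0 := neg_ne_zero.mpr hy
  have hnz : -(x - y) ≠ 0 := neg_ne_zero.mpr hz
  have hBA : ⟪B,A⟫ = 1/Real.cosh x := by rw [real_inner_comm]; exact hAB
  have hDC : ⟪D,C⟫ = 1/Real.cosh x := by rw [real_inner_comm]; exact hCD
  have hDA : ⟪D,A⟫ = 1/Real.cosh y := by rw [real_inner_comm]; exact hAD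
  have hCB : ⟪C,B⟫ = 1/Real.cosh y := by rw [real_inner_comm]; exact hBC
  have hCA : ⟪C,A⟫ = 1/Real.cosh (x - y) := by rw [real_inner_comm]; exact hAC
  have hDB : ⟪D,B⟫ = 1/Real.cosh (x - y) := by rw [real_inner_comm]; exact hBD
  have hAA : ⟪A,A⟫ = 1 := by rw [real_inner_self_eq_norm_sq, hA]; norm_num
  have hBB : ⟪B,B⟫ = 1 := by rw [real_inner_self_eq_norm_sq, hB]; norm_num
  have hCC : ⟪C,C⟫ = 1 := by rw [real_inner_self_eq_norm_sq, hC]; norm_num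
  have hDD : ⟪D,D⟫ = 1 := by rw [real_inner_self_eq_norm_sq, hD]; norm_num
  rcases hs₀ with rfl | rfl | rfl | rfl
  · rcases hu with rfl | rfl | rfl | rfl
    · exact absurd rfl hus
    · rcases hv with rfl | rfl | rfl | rfl
      · exact absurd rfl hvs
      · exact main_case _ _ _ hA x x hx hx hAB hAB (by rw [sub_self, Real.cosh_zero, hBB]; norm_num)
      · exact main_case _ _ _ hA x (x - y) hx hz hAB hAC (by rw [show x - (x - y) = y by ring]; exact hBC)
      · exact main_case _ _ _ hA x y hx hy hAB hAD (by rw [show x - y = (x - y) by ring]; exact hBD)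
    · rcases hv with rfl | rfl | rfl | rfl
      · exact absurd rfl hvs
      · exact main_case _ _ _ hA (x - y) x hz hx hAC hAB (by rw [show (x - y) - x = -y by ring, Real.cosh_neg]; exact hCB)
      · exact main_case _ _ _ hA (x - y) (x - y) hz hz hAC hAC (by rw [sub_self, Real.cosh_zero, hCC]; norm_num)
      · exact main_case _ _ _ hA (x - y) (-y) hz hny hAC (by rw [Real.cosh_neg]; exact hAD) (by rw [show (x - y) - (-y) = x by ring]; exact hCD)
    · rcases hv with rfl | rfl | rfl | rfl
      · exact absurd rfl hvs
      · exact main_case _ _ _ hA y x hy hx hAD hAB (by rw [show y - x = -(x - y) by ring, Real.cosh_neg]; exact hDB)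
      · exact main_case _ _ _ hA y (-(x - y)) hy hnz hAD (by rw [Real.cosh_neg]; exact hAC) (by rw [show y - (-(x - y)) = x by ring]; exact hDC)
      · exact main_case _ _ _ hA y y hy hy hAD hAD (by rw [sub_self, Real.cosh_zero, hDD]; norm_num)
  · rcases hu with rfl | rfl | rfl | rfl
    · rcases hv with rfl | rfl | rfl | rfl
      · exact main_case _ _ _ hB x x hx hx hBA hBA (by rw [sub_self, Real.cosh_zero, hAA]; norm_num)
      · exact absurd rfl hvs
      · exact main_case _ _ _ hB x y hx hy hBA hBC (by rw [show x - y = (x - y) by ring]; exact hAC)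
      · exact main_case _ _ _ hB x (x - y) hx hz hBA hBD (by rw [show x - (x - y) = y by ring]; exact hAD)
    · exact absurd rfl hus
    · rcases hv with rfl | rfl | rfl | rfl
      · exact main_case _ _ _ hB y x hy hx hBC hBA (by rw [show y - x = -(x - y) by ring, Real.cosh_neg]; exact hCA)
      · exact absurd rfl hvs
      · exact main_case _ _ _ hB y y hy hy hBC hBC (by rw [sub_self, Real.cosh_zero, hCC]; norm_num)
      · exact main_case _ _ _ hB y (-(x - y)) hy hnz hBC (by rw [Real.cosh_neg]; exact hBD) (by rw [show y - (-(x - y)) = x by ring]; exact hCD)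
    · rcases hv with rfl | rfl | rfl | rfl
      · exact main_case _ _ _ hB (x - y) x hz hx hBD hBA (by rw [show (x - y) - x = -y by ring, Real.cosh_neg]; exact hDA)
      · exact absurd rfl hvs
      · exact main_case _ _ _ hB (x - y) (-y) hz hny hBD (by rw [Real.cosh_neg]; exact hBC) (by rw [show (x - y) - (-y) = x by ring]; exact hDC)
      · exact main_case _ _ _ hB (x - y) (x - y) hz hz hBD hBD (by rw [sub_self, Real.cosh_zero, hDD]; norm_num)
  · rcases hu with rfl | rfl | rfl | rfl
    · rcases hv with rfl | rfl | rfl | rfl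
      · exact main_case _ _ _ hC (x - y) (x - y) hz hz hCA hCA (by rw [sub_self, Real.cosh_zero, hAA]; norm_num)
      · exact main_case _ _ _ hC (x - y) (-y) hz hny hCA (by rw [Real.cosh_neg]; exact hCB) (by rw [show (x - y) - (-y) = x by ring]; exact hAB)
      · exact absurd rfl hvs
      · exact main_case _ _ _ hC (x - y) x hz hx hCA hCD (by rw [show (x - y) - x = -y by ring, Real.cosh_neg]; exact hAD)
    · rcases hv with rfl | rfl | rfl | rfl
      · exact main_case _ _ _ hC y (-(x - y)) hy hnz hCB (by rw [Real.cosh_neg]; exact hCA) (by rw [show y - (-(x - y)) = x by ring]; exact hBA)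
      · exact main_case _ _ _ hC y y hy hy hCB hCB (by rw [sub_self, Real.cosh_zero, hBB]; norm_num)
      · exact absurd rfl hvs
      · exact main_case _ _ _ hC y x hy hx hCB hCD (by rw [show y - x = -(x - y) by ring, Real.cosh_neg]; exact hBD)
    · exact absurd rfl hus
    · rcases hv with rfl | rfl | rfl | rfl
      · exact main_case _ _ _ hC x (x - y) hx hz hCD hCA (by rw [show x - (x - y) = y by ring]; exact hDA)
      · exact main_case _ _ _ hC x y hx hy hCD hCB (by rw [show x - y = (x - y) by ring]; exact hDB)
      · exact absurd rfl hvs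
      · exact main_case _ _ _ hC x x hx hx hCD hCD (by rw [sub_self, Real.cosh_zero, hDD]; norm_num)
  · rcases hu with rfl | rfl | rfl | rfl
    · rcases hv with rfl | rfl | rfl | rfl
      · exact main_case _ _ _ hD y y hy hy hDA hDA (by rw [sub_self, Real.cosh_zero, hAA]; norm_num)
      · exact main_case _ _ _ hD y (-(x - y)) hy hnz hDA (by rw [Real.cosh_neg]; exact hDB) (by rw [show y - (-(x - y)) = x by ring]; exact hAB)
      · exact main_case _ _ _ hD y x hy hx hDA hDC (by rw [show y - x = -(x - y) by ring, Real.cosh_neg]; exact hAC)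
      · exact absurd rfl hvs
    · rcases hv with rfl | rfl | rfl | rfl
      · exact main_case _ _ _ hD (x - y) (-y) hz hny hDB (by rw [Real.cosh_neg]; exact hDA) (by rw [show (x - y) - (-y) = x by ring]; exact hBA)
      · exact main_case _ _ _ hD (x - y) (x - y) hz hz hDB hDB (by rw [sub_self, Real.cosh_zero, hBB]; norm_num)
      · exact main_case _ _ _ hD (x - y) x hz hx hDB hDC (by rw [show (x - y) - x = -y by ring, Real.cosh_neg]; exact hBC)
      · exact absurd rfl hvs
    · rcases hv with rfl | rfl | rfl | rfl
      · exact main_case _ _ _ hD x y hx hy hDC hDA (by rw [show x - y = (x - y) by ring]; exact hCA)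
      · exact main_case _ _ _ hD x (x - y) hx hz hDC hDB (by rw [show x - (x - y) = y by ring]; exact hCB)
      · exact main_case _ _ _ hD x x hx hx hDC hDC (by rw [sub_self, Real.cosh_zero, hCC]; norm_num)
      · exact absurd rfl hvs
    · exact absurd rfl hus
end

section
/- For every natural number n and all functions t, c : Fin n → ℝ, one has ∑_{i} ∑_{j} c(i)·c(j)/cosh(t(i)−t(j)) ≥ 0; that is, the kernel (s,t) ↦ 1/cosh(s−t) is a positive semidefinite kernel on ℝ. -/
/-!
With `x = e^{2s}` and `y = e^{2t}` one has `1 / cosh (s - t) = 2 e^s e^t / (x + y)`, so the kernel is,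
up to the diagonal rescaling `cᵢ ↦ cᵢ e^{tᵢ}`, the Cauchy kernel `1 / (x + y)` on `(0, ∞)`. That kernel
is a Gram kernel in `L²(0, ∞)`: `1 / (x + y) = ∫₀^∞ e^{-xu} e^{-yu} du`, hence
`∑ᵢⱼ dᵢ dⱼ / (xᵢ + xⱼ) = ∫₀^∞ (∑ᵢ dᵢ e^{-xᵢ u})² du ≥ 0`.
-/

open MeasureTheory Real Set Finset

theorem sum_sum_integral_mul_nonneg {ι α : Type*} [Fintype ι] [MeasurableSpace α]
    (μ : Measure α) (f : ι → α → ℝ) (hf : ∀ i j, Integrable (fun u ↦ f i u * f j u) μ) :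
    0 ≤ ∑ i, ∑ j, ∫ u, f i u * f j u ∂μ := by
  calc 0 ≤ ∫ u, (∑ i, f i u) ^ 2 ∂μ := integral_nonneg fun u ↦ sq_nonneg _
    _ = ∑ i, ∑ j, ∫ u, f i u * f j u ∂μ := by
      simp_rw [sq, sum_mul_sum]
      rw [integral_finsetSum _ fun i _ ↦ integrable_finsetSum _ fun j _ ↦ hf i j]
      exact sum_congr rfl fun i _ ↦ integral_finsetSum _ fun j _ ↦ hf i j

theorem sum_sum_mul_div_add_nonneg {ι : Type*} [Fintype ι] (x d : ι → ℝ)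
    (hx : ∀ i, 0 < x i) : 0 ≤ ∑ i, ∑ j, d i * d j / (x i + x j) := by
  set f : ι → ℝ → ℝ := fun i u ↦ d i * exp (-x i * u)
  have hf : ∀ i j, (fun u ↦ f i u * f j u) = fun u ↦ d i * d j * exp (-(x i + x j) * u) := by
    intro i j
    ext u
    simp only [f, neg_add, add_mul, exp_add]
    ring
  have hpos : ∀ i j, -(x i + x j) < 0 := fun i j ↦ by linarith [hx i, hx j]
  have hterm : ∀ i j, d i * d j / (x i + x j) = ∫ u in Ioi 0, f i u * f j u := by
    intro i j
    rw [hf, integral_const_mul, integral_exp_mul_Ioi (hpos i j), mul_zero, exp_zero,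
      neg_div_neg_eq, mul_one_div]
  simp_rw [hterm]
  exact sum_sum_integral_mul_nonneg _ f fun i j ↦
    hf i j ▸ (integrableOn_exp_mul_Ioi (hpos i j) 0).const_mul _

theorem cosh_sub_eq (s t : ℝ) :
    cosh (s - t) = (exp s ^ 2 + exp t ^ 2) / (2 * (exp s * exp t)) := by
  rw [cosh_eq, neg_sub, exp_sub, exp_sub]
  field_simp

/-- The kernel `(s,t) ↦ 1/cosh(s−t)` is positive semidefinite on `ℝ`: for every `n`
and all `t, c : Fin n → ℝ`, `∑ᵢ∑ⱼ cᵢ·cⱼ/cosh(tᵢ−tⱼ) ≥ 0`. -/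
theorem stmt13 (n : ℕ) (t c : Fin n → ℝ) :
    0 ≤ ∑ i : Fin n, ∑ j : Fin n, c i * c j / Real.cosh (t i - t j) := by
  have hterm : ∀ i j, c i * c j / cosh (t i - t j) =
      2 * (c i * exp (t i) * (c j * exp (t j)) / (exp (t i) ^ 2 + exp (t j) ^ 2)) := by
    intro i j
    rw [cosh_sub_eq]
    field_simp
  simp_rw [hterm, ← mul_sum]
  exact mul_nonneg zero_le_two
    (sum_sum_mul_div_add_nonneg (fun i ↦ exp (t i) ^ 2) _ fun i ↦ by positivity)
end

section
/- Let H be a real Hilbert space and γ: ℝ → H a continuous map such that ‖γ(t)‖ = 1 for all t, |⟨γ(s),γ(t)⟩| < 1 whenever s ≠ t, and the set γ(ℝ) is projection-invariant. Then there exists a continuous injective function ψ: ℝ → ℝ whose image is an open interval (possibly bounded, half-infinite, or all of ℝ) such that |⟨γ(s),γ(t)⟩| = 1/cosh(ψ(t)−ψ(s)) for all s,t ∈ ℝ. -/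
/-!
Write `d(s, t) = arcosh |⟪γ s, γ t⟫|⁻¹`. Projection invariance at `γ r` says
`(c - a b)² = c² (1 - a²) (1 - b²)` for `a = ⟪γ r, γ s⟫`, `b = ⟪γ r, γ t⟫`, `c = ⟪γ s, γ t⟫`,
and with `|a| = 1 / cosh d(r, s)` etc. this is the statement that `cosh d(s, t)` equals
`cosh (d(r, s) ± d(r, t))`: of any three points of the curve, one is "between" the other two.
The function `d` is continuous (the inner products never vanish) and vanishes only on the
diagonal, so a connectedness argument along `(x, z)` puts every `y ∈ (x, z)` between `x` and
`z`; hence `d` is additive along `ℝ`, and `ψ(t) = ±d(0, t)` does the job.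
-/

open RealInnerProductSpace

open Real Set Function

namespace Real

theorem sinh_arcosh_inv {x : ℝ} (h0 : 0 < x) (h1 : x ≤ 1) :
    sinh (arcosh x⁻¹) = √(1 - x ^ 2) / x := by
  rw [sinh_arcosh ((one_le_inv₀ h0).2 h1), show x⁻¹ ^ 2 - 1 = (1 - x ^ 2) / x ^ 2 by field_simp,
    sqrt_div' _ (sq_nonneg x), sqrt_sq h0.le]

theorem arcosh_inv_abs_eq_add_or_eq_abs_sub {a b c : ℝ} (ha : a ≠ 0) (hb : b ≠ 0) (hc : c ≠ 0)
    (ha1 : |a| ≤ 1) (hb1 : |b| ≤ 1) (hc1 : |c| ≤ 1)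
    (h : (c - a * b) ^ 2 = c ^ 2 * ((1 - a ^ 2) * (1 - b ^ 2))) :
    arcosh |c|⁻¹ = arcosh |a|⁻¹ + arcosh |b|⁻¹ ∨
      arcosh |c|⁻¹ = |arcosh |a|⁻¹ - arcosh |b|⁻¹| := by
  have one_le {x : ℝ} (hx : x ≠ 0) (hx1 : |x| ≤ 1) : 1 ≤ |x|⁻¹ := (one_le_inv₀ (abs_pos.2 hx)).2 hx1
  have hca := cosh_arcosh (one_le ha ha1)
  have hcb := cosh_arcosh (one_le hb hb1)
  have hsa := sinh_arcosh_inv (abs_pos.2 ha) ha1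
  have hsb := sinh_arcosh_inv (abs_pos.2 hb) hb1
  rw [sq_abs] at hsa hsb
  have hw : 0 ≤ arcosh |c|⁻¹ := arcosh_nonneg (one_le hc hc1)
  have huv : 0 ≤ arcosh |a|⁻¹ + arcosh |b|⁻¹ :=
    add_nonneg (arcosh_nonneg (one_le ha ha1)) (arcosh_nonneg (one_le hb hb1))
  set u := arcosh |a|⁻¹
  set v := arcosh |b|⁻¹
  set A := √(1 - a ^ 2)
  set B := √(1 - b ^ 2)
  have hA : A ^ 2 = 1 - a ^ 2 := sq_sqrt (sub_nonneg.2 ((sq_le_one_iff_abs_le_one a).2 ha1))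
  have hB : B ^ 2 = 1 - b ^ 2 := sq_sqrt (sub_nonneg.2 ((sq_le_one_iff_abs_le_one b).2 hb1))
  have hAB : A * B ≤ 1 := mul_le_one₀ (sqrt_le_one.2 (sub_le_self _ (sq_nonneg a)))
    (sqrt_nonneg _) (sqrt_le_one.2 (sub_le_self _ (sq_nonneg b)))
  have hsum : cosh (u + v) * (|a| * |b|) = 1 + A * B := by
    rw [cosh_add, hca, hcb, hsa, hsb]; field_simp
  have hdiff : cosh (u - v) * (|a| * |b|) = 1 - A * B := by
    rw [cosh_sub, hca, hcb, hsa, hsb]; field_simp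
  have hcosh (w p : ℝ) (hp : 0 < p) (hw : cosh w * (|a| * |b|) = p) (hab : a * b = c * p) :
      cosh (arcosh |c|⁻¹) = cosh w := by
    rw [← abs_mul, hab, abs_mul, abs_of_pos hp, ← mul_assoc] at hw
    rw [cosh_arcosh (one_le hc hc1)]
    exact (eq_inv_of_mul_eq_one_left (mul_right_cancel₀ hp.ne' (hw.trans (one_mul p).symm))).symm
  have hfac : (a * b - c * (1 + A * B)) * (a * b - c * (1 - A * B)) = 0 := by
    linear_combination h - c ^ 2 * (1 - b ^ 2) * hA - c ^ 2 * A ^ 2 * hB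
  rcases mul_eq_zero.1 hfac with h' | h'
  · exact Or.inl <| cosh_injOn hw huv (hcosh _ _ (by positivity) hsum (sub_eq_zero.1 h'))
  · have hp : 0 < 1 - A * B := lt_of_le_of_ne (sub_nonneg.2 hAB) fun h0 ↦
      mul_ne_zero ha hb (by rw [sub_eq_zero.1 h', ← h0, mul_zero])
    refine Or.inr <| cosh_injOn hw (abs_nonneg (u - v)) ?_
    rw [cosh_abs]
    exact hcosh _ _ hp hdiff (sub_eq_zero.1 h')

end Real

section Projection

variable {H : Type*} [NormedAddCommGroup H] [InnerProductSpace ℝ H]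

theorem abs_real_inner_le_one_of_norm_eq_one {x y : H} (hx : ‖x‖ = 1) (hy : ‖y‖ = 1) :
    |⟪x, y⟫| ≤ 1 :=
  abs_le.2 (real_inner_mem_Icc_of_norm_eq_one hx hy)

theorem inner_sphProj_sphProj_s14 {u : H} (hu : ‖u‖ = 1) (x y : H) :
    ⟪sphProj u x, sphProj u y⟫ =
      (√(1 - ⟪u, x⟫ ^ 2))⁻¹ * (√(1 - ⟪u, y⟫ ^ 2))⁻¹ * (⟪x, y⟫ - ⟪u, x⟫ * ⟪u, y⟫) := by
  rw [sphProj, sphProj, real_inner_smul_left, real_inner_smul_right, inner_sub_left,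
    inner_sub_right, inner_sub_right, real_inner_smul_left, real_inner_smul_left,
    real_inner_smul_right, real_inner_smul_right, real_inner_self_eq_norm_sq, hu,
    real_inner_comm x u]
  ring

theorem ProjInvariant.sq_inner_sub_mul {S : Set H} (hS : ProjInvariant S) {u x y : H}
    (hu : u ∈ S) (hx : x ∈ S) (hy : y ∈ S) (hu1 : ‖u‖ = 1) (hxu : |⟪x, u⟫| < 1)
    (hyu : |⟪y, u⟫| < 1) :
    (⟪x, y⟫ - ⟪u, x⟫ * ⟪u, y⟫) ^ 2 = ⟪x, y⟫ ^ 2 * ((1 - ⟪u, x⟫ ^ 2) * (1 - ⟪u, y⟫ ^ 2)) := by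
  have h := congrArg (· ^ 2) (hS u hu x hx y hy hxu hyu)
  rw [real_inner_comm] at hxu hyu
  have hx0 : 0 < 1 - ⟪u, x⟫ ^ 2 := by nlinarith [sq_abs ⟪u, x⟫, abs_nonneg ⟪u, x⟫]
  have hy0 : 0 < 1 - ⟪u, y⟫ ^ 2 := by nlinarith [sq_abs ⟪u, y⟫, abs_nonneg ⟪u, y⟫]
  simp only [inner_sphProj_sphProj_s14 hu1, sq_abs, mul_pow, inv_pow, sq_sqrt hx0.le,
    sq_sqrt hy0.le] at h
  field_simp at h
  linear_combination h

end Projection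

structure IsProjInvariantCurve {H : Type*} [NormedAddCommGroup H] [InnerProductSpace ℝ H]
    (γ : ℝ → H) : Prop where
  continuous : Continuous γ
  norm_eq_one : ∀ t, ‖γ t‖ = 1
  abs_inner_lt_one : ∀ s t, s ≠ t → |⟪γ s, γ t⟫| < 1
  projInvariant : ProjInvariant (range γ)

noncomputable def hypDist {H : Type*} [NormedAddCommGroup H] [InnerProductSpace ℝ H]
    (γ : ℝ → H) (s t : ℝ) : ℝ :=
  arcosh |⟪γ s, γ t⟫|⁻¹

section Curve

variable {H : Type*} [NormedAddCommGroup H] [InnerProductSpace ℝ H] {γ : ℝ → H}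

theorem hypDist_comm (γ : ℝ → H) (s t : ℝ) : hypDist γ s t = hypDist γ t s := by
  rw [hypDist, hypDist, real_inner_comm]

theorem hypDist_self {t : ℝ} (h : ‖γ t‖ = 1) : hypDist γ t t = 0 := by
  rw [hypDist, inner_self_eq_one_of_norm_eq_one h, abs_one, inv_one, arcosh_zero]

namespace IsProjInvariantCurve

theorem sq_inner_sub_mul (hγ : IsProjInvariantCurve γ) {r s t : ℝ} (hrs : r ≠ s) (hrt : r ≠ t) :
    (⟪γ s, γ t⟫ - ⟪γ r, γ s⟫ * ⟪γ r, γ t⟫) ^ 2 =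
      ⟪γ s, γ t⟫ ^ 2 * ((1 - ⟪γ r, γ s⟫ ^ 2) * (1 - ⟪γ r, γ t⟫ ^ 2)) :=
  hγ.projInvariant.sq_inner_sub_mul (mem_range_self r) (mem_range_self s) (mem_range_self t)
    (hγ.norm_eq_one r) (hγ.abs_inner_lt_one s r hrs.symm) (hγ.abs_inner_lt_one t r hrt.symm)

-- If `⟪γ s, γ w⟫ = 0` at the first such `w > s`, the identity above forces `⟪γ r, γ w⟫ = 0`
-- for every `r ∈ (s, w)`, which is absurd as `r → w`.
theorem inner_ne_zero_of_lt (hγ : IsProjInvariantCurve γ) {s t : ℝ} (hst : s < t) :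
    ⟪γ s, γ t⟫ ≠ 0 := by
  intro hzero
  set K := Icc s t ∩ {r | ⟪γ s, γ r⟫ = 0}
  have hK : IsClosed K :=
    isClosed_Icc.inter (isClosed_eq (continuous_const.inner hγ.continuous) continuous_const)
  have hKbdd : BddBelow K := ⟨s, fun r hr ↦ hr.1.1⟩
  obtain ⟨w, hwK, hwmin⟩ : ∃ w ∈ K, ∀ r ∈ K, w ≤ r :=
    ⟨sInf K, hK.csInf_mem ⟨t, ⟨hst.le, le_rfl⟩, hzero⟩ hKbdd, fun r hr ↦ csInf_le hKbdd hr⟩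
  have hsw : s < w := hwK.1.1.lt_of_ne <| by
    rintro rfl
    exact one_ne_zero ((inner_self_eq_one_of_norm_eq_one (hγ.norm_eq_one s)).symm.trans hwK.2)
  have hvanish : EqOn (fun r ↦ ⟪γ r, γ w⟫) 0 (Ioo s w) := by
    intro r hr
    have hrs : ⟪γ r, γ s⟫ ≠ 0 := fun h ↦ hr.2.not_ge <|
      hwmin r ⟨⟨hr.1.le, hr.2.le.trans hwK.1.2⟩, (real_inner_comm _ _).trans h⟩
    have h := hγ.sq_inner_sub_mul hr.1.ne' hr.2.ne
    rw [hwK.2, zero_sub, neg_sq, zero_pow two_ne_zero, zero_mul, pow_eq_zero_iff two_ne_zero] at h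
    exact (mul_eq_zero.1 h).resolve_left hrs
  have hw : ⟪γ w, γ w⟫ = 0 :=
    hvanish.closure (hγ.continuous.inner continuous_const) continuous_const <| by
      rw [closure_Ioo hsw.ne]; exact right_mem_Icc.2 hsw.le
  rw [inner_self_eq_one_of_norm_eq_one (hγ.norm_eq_one w)] at hw
  exact one_ne_zero hw

theorem inner_ne_zero (hγ : IsProjInvariantCurve γ) (s t : ℝ) : ⟪γ s, γ t⟫ ≠ 0 := by
  rcases lt_trichotomy s t with h | rfl | h
  · exact hγ.inner_ne_zero_of_lt h
  · rw [inner_self_eq_one_of_norm_eq_one (hγ.norm_eq_one s)]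
    exact one_ne_zero
  · rw [real_inner_comm]
    exact hγ.inner_ne_zero_of_lt h

theorem one_le_inv_abs_inner (hγ : IsProjInvariantCurve γ) (s t : ℝ) :
    1 ≤ |⟪γ s, γ t⟫|⁻¹ :=
  (one_le_inv₀ (abs_pos.2 (hγ.inner_ne_zero s t))).2
    (abs_real_inner_le_one_of_norm_eq_one (hγ.norm_eq_one s) (hγ.norm_eq_one t))

theorem cosh_hypDist (hγ : IsProjInvariantCurve γ) (s t : ℝ) :
    cosh (hypDist γ s t) = |⟪γ s, γ t⟫|⁻¹ :=
  cosh_arcosh (hγ.one_le_inv_abs_inner s t)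

theorem hypDist_pos (hγ : IsProjInvariantCurve γ) {s t : ℝ} (hst : s ≠ t) :
    0 < hypDist γ s t :=
  arcosh_pos ((one_lt_inv₀ (abs_pos.2 (hγ.inner_ne_zero s t))).2 (hγ.abs_inner_lt_one s t hst))

theorem continuous_hypDist (hγ : IsProjInvariantCurve γ) : Continuous (uncurry (hypDist γ)) :=
  continuousOn_arcosh.comp_continuous
    (((hγ.continuous.comp continuous_fst).inner (hγ.continuous.comp continuous_snd)).abs.inv₀
      fun p ↦ abs_ne_zero.2 (hγ.inner_ne_zero p.1 p.2))
    fun p ↦ hγ.one_le_inv_abs_inner p.1 p.2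

theorem hypDist_eq_add_or_abs_sub_eq (hγ : IsProjInvariantCurve γ) {x y z : ℝ} (hxy : x ≠ y)
    (hyz : y ≠ z) :
    hypDist γ x z = hypDist γ x y + hypDist γ y z ∨
      |hypDist γ x y - hypDist γ y z| = hypDist γ x z := by
  have unit := hγ.norm_eq_one
  rw [hypDist_comm γ x y, eq_comm (b := hypDist γ x z)]
  exact arcosh_inv_abs_eq_add_or_eq_abs_sub (hγ.inner_ne_zero y x) (hγ.inner_ne_zero y z)
    (hγ.inner_ne_zero x z) (abs_real_inner_le_one_of_norm_eq_one (unit y) (unit x))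
    (abs_real_inner_le_one_of_norm_eq_one (unit y) (unit z))
    (abs_real_inner_le_one_of_norm_eq_one (unit x) (unit z))
    (hγ.sq_inner_sub_mul hxy.symm hyz)

end IsProjInvariantCurve

end Curve

theorem eq_add_of_eq_add_or_abs_sub_eq {d : ℝ → ℝ → ℝ} (hd : Continuous (uncurry d))
    (hdiag : ∀ x, d x x = 0) (hpos : ∀ x y, x < y → 0 < d x y)
    (htri : ∀ x y z, x < y → y < z → d x z = d x y + d y z ∨ |d x y - d y z| = d x z)
    {x y z : ℝ} (hxy : x ≤ y) (hyz : y ≤ z) : d x z = d x y + d y z := by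
  rcases hxy.eq_or_lt with rfl | hxy
  · rw [hdiag, zero_add]
  rcases hyz.eq_or_lt with rfl | hyz
  · rw [hdiag, add_zero]
  have hxz := hxy.trans hyz
  have hleft : Continuous (d x) := hd.comp (Continuous.prodMk_right x)
  have hright : Continuous (d · z) := hd.comp (Continuous.prodMk_left z)
  suffices Ioo x z ⊆ {y | d x z = d x y + d y z} from this ⟨hxy, hyz⟩
  refine (isPreconnected_iff_subset_of_disjoint_closed.1 isPreconnected_Ioo
    {y | d x z = d x y + d y z}
    {y | |d x y - d y z| = d x z} (isClosed_eq continuous_const (hleft.add hright))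
    (isClosed_eq (hleft.sub hright).abs continuous_const) (fun y hy ↦ htri x y z hy.1 hy.2)
    ?_).resolve_right ?_
  · refine eq_empty_iff_forall_notMem.2 fun y ⟨hy, (hsum : d x z = _), (hdiff : _ = d x z)⟩ ↦ ?_
    have := hpos x y hy.1
    have := hpos y z hy.2
    exact (abs_sub_lt_iff.2 ⟨by linarith, by linarith⟩).ne (hdiff.trans hsum)
  · -- `d x · - d · z` runs from `-d x z` to `d x z`, so it vanishes somewhere in between
    intro hsub
    obtain ⟨y, hy, hy0 : d x y - d y z = 0⟩ : (0 : ℝ) ∈ (fun y ↦ d x y - d y z) '' Ioo x z :=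
      intermediate_value_Ioo (f := fun y ↦ d x y - d y z) hxz.le (hleft.sub hright).continuousOn
        (by rw [hdiag, hdiag, zero_sub, sub_zero, mem_Ioo, neg_lt_zero, and_self]
            exact hpos x z hxz)
    have hy' : |d x y - d y z| = d x z := hsub hy
    rw [hy0, abs_zero] at hy'
    exact (hpos x z hxz).ne hy'

theorem exists_continuous_sub_eq_of_add {d : ℝ → ℝ → ℝ} (hd : Continuous (uncurry d))
    (hadd : ∀ x y z, x ≤ y → y ≤ z → d x z = d x y + d y z) :
    ∃ ψ : ℝ → ℝ, Continuous ψ ∧ ∀ s t, s ≤ t → ψ t - ψ s = d s t := by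
  refine ⟨fun t ↦ d 0 (max t 0) - d (min t 0) 0, ?_, fun s t hst ↦ ?_⟩
  · exact (hd.comp (continuous_const.prodMk (continuous_id.max continuous_const))).sub
      (hd.comp ((continuous_id.min continuous_const).prodMk continuous_const))
  have h00 : d 0 0 = 0 := by linarith [hadd 0 0 0 le_rfl le_rfl]
  rcases le_total 0 s with hs | hs
  · simp only [max_eq_left hs, max_eq_left (hs.trans hst), min_eq_right hs,
      min_eq_right (hs.trans hst)]
    linarith [hadd 0 s t hs hst]
  rcases le_total 0 t with ht | ht
  · simp only [max_eq_left ht, min_eq_right ht, max_eq_right hs, min_eq_left hs]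
    linarith [hadd s 0 t hs ht]
  · simp only [max_eq_right ht, min_eq_left ht, max_eq_right hs, min_eq_left hs]
    linarith [hadd s t 0 hst ht]

theorem StrictMono.isOpen_range_of_continuous {α β : Type*} [ConditionallyCompleteLinearOrder α]
    [TopologicalSpace α] [OrderTopology α] [DenselyOrdered α] [NoMinOrder α] [NoMaxOrder α]
    [LinearOrder β] [TopologicalSpace β] [OrderTopology β] {f : α → β} (hf : StrictMono f)
    (hc : Continuous f) : IsOpen (range f) := by
  refine isOpen_iff_mem_nhds.2 ?_
  rintro _ ⟨x, rfl⟩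
  obtain ⟨a, ha⟩ := exists_lt x
  obtain ⟨b, hb⟩ := exists_gt x
  exact Filter.mem_of_superset (Ioo_mem_nhds (hf ha) (hf hb))
    ((intermediate_value_Ioo (ha.trans hb).le hc.continuousOn).trans (image_subset_range _ _))

theorem stmt14_general {H : Type*} [NormedAddCommGroup H] [InnerProductSpace ℝ H]
    (γ : ℝ → H) (hcont : Continuous γ) (hunit : ∀ t : ℝ, ‖γ t‖ = 1)
    (hlt : ∀ s t : ℝ, s ≠ t → |⟪γ s, γ t⟫| < 1)
    (hproj : ProjInvariant (Set.range γ)) :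
    ∃ ψ : ℝ → ℝ, Continuous ψ ∧ Function.Injective ψ ∧
      IsOpen (Set.range ψ) ∧ (Set.range ψ).OrdConnected ∧
      ∀ s t : ℝ, |⟪γ s, γ t⟫| = 1 / Real.cosh (ψ t - ψ s) := by
  have hγ : IsProjInvariantCurve γ := ⟨hcont, hunit, hlt, hproj⟩
  have hadd (x y z : ℝ) (hxy : x ≤ y) (hyz : y ≤ z) :
      hypDist γ x z = hypDist γ x y + hypDist γ y z :=
    eq_add_of_eq_add_or_abs_sub_eq hγ.continuous_hypDist (fun t ↦ hypDist_self (hunit t))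
      (fun _ _ h ↦ hγ.hypDist_pos h.ne)
      (fun _ _ _ h h' ↦ hγ.hypDist_eq_add_or_abs_sub_eq h.ne h'.ne) hxy hyz
  obtain ⟨ψ, hψc, hψ⟩ := exists_continuous_sub_eq_of_add hγ.continuous_hypDist hadd
  have hmono : StrictMono ψ := fun s t h ↦ by linarith [hψ s t h.le, hγ.hypDist_pos h.ne]
  refine ⟨ψ, hψc, hmono.injective, hmono.isOpen_range_of_continuous hψc,
    (isPreconnected_range hψc).ordConnected, fun s t ↦ ?_⟩
  rcases le_total s t with h | h
  · rw [hψ s t h, hγ.cosh_hypDist, one_div, inv_inv]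
  · rw [← cosh_neg, neg_sub, hψ t s h, hγ.cosh_hypDist, one_div, inv_inv, real_inner_comm]

/-- A continuous curve of unit vectors in a real Hilbert space whose image is
projection-invariant (and with `|⟨γ(s),γ(t)⟩| < 1` for `s ≠ t`) is, up to a
continuous injective reparametrization `ψ` whose image is an open interval,
the helix with `|⟨γ(s),γ(t)⟩| = 1/cosh(ψ(t)−ψ(s))`. -/
theorem stmt14 {H : Type*} [NormedAddCommGroup H] [InnerProductSpace ℝ H]
    [CompleteSpace H]
    (γ : ℝ → H) (hcont : Continuous γ) (hunit : ∀ t : ℝ, ‖γ t‖ = 1)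
    (hlt : ∀ s t : ℝ, s ≠ t → |⟪γ s, γ t⟫| < 1)
    (hproj : ProjInvariant (Set.range γ)) :
    ∃ ψ : ℝ → ℝ, Continuous ψ ∧ Function.Injective ψ ∧
      IsOpen (Set.range ψ) ∧ (Set.range ψ).OrdConnected ∧
      ∀ s t : ℝ, |⟪γ s, γ t⟫| = 1 / Real.cosh (ψ t - ψ s) :=
  stmt14_general γ hcont hunit hlt hproj
end

section
/- Every metric space with exactly 5 points satisfying the triangle equality admits an isometric embedding into the real line ℝ. -/
/-- Every metric space with exactly five points satisfying the triangle equality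
admits an isometric embedding into the real line. -/
theorem stmt16 (E : Type*) [MetricSpace E]
    (hcard : Nat.card E = 5) (htri : TriangleEquality E) :
    ∃ φ : E → ℝ, Isometry φ := by
  classical
  have hfin : Finite E := Nat.finite_of_card_ne_zero (by omega)
  have hft : Fintype E := Fintype.ofFinite E
  have hnE : Nonempty E := by
    rw [← Fintype.card_pos_iff, ← Nat.card_eq_fintype_card]; omega
  have hnEE : Nonempty (E × E) := ⟨hnE.some, hnE.some⟩
  obtain ⟨⟨p, q⟩, hmax⟩ := Finite.exists_max (fun w : E × E => dist w.1 w.2)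
  set D := dist p q with hD
  have maxle : ∀ u v : E, dist u v ≤ D := fun u v => hmax (u, v)
  have btw : ∀ u v : E, dist u v = D → ∀ w : E, dist u w + dist w v = D := by
    intro u v huv w
    rcases htri u v w with h | h | h <;>
      linarith [maxle v w, maxle w u, dist_comm w u, dist_comm v w,
        dist_nonneg (x := w) (y := u), dist_nonneg (x := v) (y := w)]
  refine ⟨fun w => dist p w, Isometry.of_dist_eq ?_⟩
  intro x y
  rw [Real.dist_eq, abs_eq dist_nonneg]
  have bx := btw p q rfl x
  have by' := btw p q rfl y
  rcases htri p x y with h1 | h1 | h1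
  · left; linarith [dist_comm y p]
  · rcases htri q x y with h2 | h2 | h2
    · right; linarith [dist_comm y p, dist_comm x q, dist_comm y q]
    · -- bad rectangle case, use fifth point
      by_cases ha : dist p x = 0
      · right; linarith [dist_comm y p]
      by_cases ha' : dist p y = 0
      · left; linarith [dist_comm y p]
      exfalso
      have hapos : 0 < dist p x := lt_of_le_of_ne dist_nonneg (Ne.symm ha)
      have hapos' : 0 < dist p y := lt_of_le_of_ne dist_nonneg (Ne.symm ha')
      have hxyD : dist x y = D := by
        linarith [dist_comm y p, dist_comm x q, dist_comm y q]
      obtain ⟨z, hzp, hzq, hzx, hzy⟩ :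
          ∃ z : E, z ≠ p ∧ z ≠ q ∧ z ≠ x ∧ z ≠ y := by
        have hcard4 : ({p, q, x, y} : Finset E).card ≤ 4 := by
          calc ({p, q, x, y} : Finset E).card
              ≤ ({q, x, y} : Finset E).card + 1 := Finset.card_insert_le _ _
            _ ≤ ({x, y} : Finset E).card + 1 + 1 :=
                Nat.add_le_add_right (Finset.card_insert_le _ _) 1
            _ ≤ ({y} : Finset E).card + 1 + 1 + 1 :=
                Nat.add_le_add_right (Nat.add_le_add_right (Finset.card_insert_le _ _) 1) 1
            _ ≤ 4 := by simp
        have hnsub : ¬ ((Finset.univ : Finset E) ⊆ ({p, q, x, y} : Finset E)) := by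
          intro hsub
          have hle := Finset.card_le_card hsub
          have h5 : (Finset.univ : Finset E).card = 5 := by
            rw [Finset.card_univ, ← Nat.card_eq_fintype_card, hcard]
          omega
        obtain ⟨z, -, hzmem⟩ := Finset.not_subset.mp hnsub
        simp only [Finset.mem_insert, Finset.mem_singleton, not_or] at hzmem
        exact ⟨z, hzmem.1, hzmem.2.1, hzmem.2.2.1, hzmem.2.2.2⟩
      have hbz := btw p q rfl z
      have hcz := btw x y hxyD z
      have h1' : 0 < dist p z := dist_pos.2 fun h => hzp h.symm
      have h2' : 0 < dist z q := dist_pos.2 hzq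
      have h3' : 0 < dist x z := dist_pos.2 fun h => hzx h.symm
      have h4' : 0 < dist z y := dist_pos.2 hzy
      rcases htri p x z with t1 | t1 | t1 <;>
        rcases htri p y z with t2 | t2 | t2 <;>
          rcases htri q x z with t3 | t3 | t3 <;>
            rcases htri q y z with t4 | t4 | t4 <;>
              linarith [dist_comm z p, dist_comm x q, dist_comm y q, dist_comm y p,
                dist_comm z y, dist_comm x z, dist_comm z q, dist_comm y z, dist_comm z x]
    · left; linarith [dist_comm y p, dist_comm x q, dist_comm y q]
  · right; linarith [dist_comm y p]
end

section
/- Let (E,d) be a metric space such that every subset of E containing at most 4 points admits an isometric embedding into the real line ℝ. Then E itself admits an isometric embedding into ℝ. -/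
/-!
Fix two distinct points `a ≠ b`. For an isometric embedding `φ` of a finite set containing
`a` and `b`, the law of cosines on the line reads
`d(a,b)² + d(a,x)² - d(b,x)² = 2 (φ b - φ a) (φ x - φ a)`,
so the coordinate `x ↦ (d(a,b)² + d(a,x)² - d(b,x)²) / (2 d(a,b))` equals `±(φ x - φ a)`, with
the sign of `φ b - φ a`. Embedding `{a, b, x, y}` therefore shows that this coordinate, which is
defined from distances alone, moves by exactly `d(x,y)` between `x` and `y`.
-/

namespace Metric

variable {E : Type*} [MetricSpace E]

noncomputable def lineCoord (a b x : E) : ℝ :=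
  (dist a b ^ 2 + dist a x ^ 2 - dist b x ^ 2) / (2 * dist a b)

theorem lineCoord_mul_dist {a b x : E} (hab : a ≠ b) {φ : E → ℝ}
    (hφab : |φ a - φ b| = dist a b) (hφax : |φ a - φ x| = dist a x)
    (hφbx : |φ b - φ x| = dist b x) :
    lineCoord a b x * dist a b = (φ b - φ a) * (φ x - φ a) := by
  have hd : dist a b ≠ 0 := dist_ne_zero.mpr hab
  rw [lineCoord, ← hφab, ← hφax, ← hφbx, sq_abs, sq_abs, sq_abs, div_mul_eq_mul_div,
    div_eq_iff (by rwa [hφab, mul_ne_zero_iff, and_iff_right two_ne_zero])]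
  ring

theorem abs_lineCoord_sub_lineCoord [DecidableEq E] {a b x y : E} (hab : a ≠ b) {φ : E → ℝ}
    (hφ : ∀ u ∈ ({a, b, x, y} : Finset E), ∀ v ∈ ({a, b, x, y} : Finset E),
      |φ u - φ v| = dist u v) :
    |lineCoord a b x - lineCoord a b y| = dist x y := by
  have hx := lineCoord_mul_dist (x := x) hab (hφ _ (by simp) _ (by simp))
    (hφ _ (by simp) _ (by simp)) (hφ _ (by simp) _ (by simp))
  have hy := lineCoord_mul_dist (x := y) hab (hφ _ (by simp) _ (by simp))
    (hφ _ (by simp) _ (by simp)) (hφ _ (by simp) _ (by simp))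
  have hdiff : (lineCoord a b x - lineCoord a b y) * dist a b = (φ b - φ a) * (φ x - φ y) := by
    rw [sub_mul, hx, hy]; ring
  refine mul_right_cancel₀ (dist_ne_zero.mpr hab) ?_
  calc |lineCoord a b x - lineCoord a b y| * dist a b
      = |(lineCoord a b x - lineCoord a b y) * dist a b| := by
        rw [abs_mul, abs_of_nonneg dist_nonneg]
    _ = |φ b - φ a| * |φ x - φ y| := by rw [hdiff, abs_mul]
    _ = dist x y * dist a b := by
        rw [abs_sub_comm, hφ _ (by simp) _ (by simp), hφ _ (by simp) _ (by simp), mul_comm]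

end Metric

/-- If every subset of a metric space `E` with at most four points admits an
isometric embedding into the real line, then `E` itself admits an isometric
embedding into the real line. -/
theorem stmt17 (E : Type*) [MetricSpace E]
    (h : ∀ s : Finset E, s.card ≤ 4 →
      ∃ φ : E → ℝ, ∀ x ∈ s, ∀ y ∈ s, |φ x - φ y| = dist x y) :
    ∃ φ : E → ℝ, Isometry φ := by
  classical
  rcases subsingleton_or_nontrivial E with hE | hE
  · exact ⟨fun _ => 0, isometry_subsingleton⟩
  obtain ⟨a, b, hab⟩ := exists_pair_ne E
  refine ⟨Metric.lineCoord a b, Isometry.of_dist_eq fun x y => ?_⟩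
  obtain ⟨φ, hφ⟩ := h {a, b, x, y} Finset.card_le_four
  rw [Real.dist_eq, Metric.abs_lineCoord_sub_lineCoord hab hφ]
end

section
/- Let c₁, c₂, c₃ be real numbers with c₁ ≥ 1, c₂ ≥ 1, c₃ ≥ 1, and let ε ∈ {1,−1}. If (c₁ + 1/c₁)(c₂ + 1/c₂) − 2(c₃ + 1/c₃) = ε·(c₁ − 1/c₁)(c₂ − 1/c₂), then c₃ = c₁·c₂, or c₁ = c₂·c₃, or c₂ = c₁·c₃. -/
/-!
Write `cᵢ = exp dᵢ`, so that `(c + 1/c)/2 = cosh d` and `(c - 1/c)/2 = sinh d`. By the addition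
formula for `cosh`, the hypothesis says `cosh d₃ = cosh (d₁ - ε d₂)`. Since `x + 1/x = y + 1/y`
forces `x = y` or `x y = 1`, this gives `d₃ = ±(d₁ - ε d₂)`; the only sign that does not give the
conclusion directly is `d₃ = -(d₁ + d₂)`, which with all `dᵢ ≥ 0` forces `d₁ = d₂ = d₃ = 0`.
-/

section Field

variable {K : Type*} [Field K]

theorem add_one_div_eq_add_one_div_iff {x y : K} (hx : x ≠ 0) (hy : y ≠ 0) :
    x + 1 / x = y + 1 / y ↔ x = y ∨ x * y = 1 := by
  have factor : x + 1 / x - (y + 1 / y) = (x - y) * (x * y - 1) / (x * y) := by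
    field_simp
    ring
  rw [← sub_eq_zero, factor, div_eq_zero_iff, or_iff_left (mul_ne_zero hx hy), mul_eq_zero,
    sub_eq_zero, sub_eq_zero]

theorem add_one_div_mul_add_one_div_sub_sub_one_div_mul_sub_one_div {a b : K} (ha : a ≠ 0)
    (hb : b ≠ 0) :
    (a + 1 / a) * (b + 1 / b) - (a - 1 / a) * (b - 1 / b) = 2 * (a / b + 1 / (a / b)) := by
  field_simp
  ring

theorem add_one_div_mul_add_one_div_add_sub_one_div_mul_sub_one_div {a b : K} (ha : a ≠ 0)
    (hb : b ≠ 0) :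
    (a + 1 / a) * (b + 1 / b) + (a - 1 / a) * (b - 1 / b) = 2 * (a * b + 1 / (a * b)) := by
  field_simp
  ring

end Field

/-- The key algebraic step: if `c₁, c₂, c₃ ≥ 1`, `ε ∈ {1, −1}` and
`(c₁ + 1/c₁)(c₂ + 1/c₂) − 2(c₃ + 1/c₃) = ε(c₁ − 1/c₁)(c₂ − 1/c₂)`,
then one of `c₁, c₂, c₃` is the product of the other two. -/
theorem stmt18 (c₁ c₂ c₃ ε : ℝ)
    (h₁ : 1 ≤ c₁) (h₂ : 1 ≤ c₂) (h₃ : 1 ≤ c₃)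
    (hε : ε = 1 ∨ ε = -1)
    (h : (c₁ + 1 / c₁) * (c₂ + 1 / c₂) - 2 * (c₃ + 1 / c₃) =
      ε * ((c₁ - 1 / c₁) * (c₂ - 1 / c₂))) :
    c₃ = c₁ * c₂ ∨ c₁ = c₂ * c₃ ∨ c₂ = c₁ * c₃ := by
  have hc₁ : c₁ ≠ 0 := by positivity
  have hc₂ : c₂ ≠ 0 := by positivity
  have hc₃ : c₃ ≠ 0 := by positivity
  rcases hε with rfl | rfl
  · have hcosh : c₃ + 1 / c₃ = c₁ / c₂ + 1 / (c₁ / c₂) := by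
      linear_combination (-1 / 2 : ℝ) *
        (h - add_one_div_mul_add_one_div_sub_sub_one_div_mul_sub_one_div hc₁ hc₂)
    rcases (add_one_div_eq_add_one_div_iff hc₃ (div_ne_zero hc₁ hc₂)).1 hcosh with heq | hinv
    · exact Or.inr (Or.inl (by rw [heq, mul_div_cancel₀ c₁ hc₂]))
    · refine Or.inr (Or.inr ?_)
      field_simp at hinv
      linear_combination -hinv
  · have hcosh : c₃ + 1 / c₃ = c₁ * c₂ + 1 / (c₁ * c₂) := by
      linear_combination (-1 / 2 : ℝ) *
        (h - add_one_div_mul_add_one_div_add_sub_one_div_mul_sub_one_div hc₁ hc₂)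
    refine Or.inl ?_
    rcases (add_one_div_eq_add_one_div_iff hc₃ (mul_ne_zero hc₁ hc₂)).1 hcosh with heq | hinv
    · exact heq
    · have h₁₂ : 1 ≤ c₁ * c₂ := one_le_mul_of_one_le_of_one_le h₁ h₂
      nlinarith
end
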